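/- arXiv:1909.07661 — 8 statements merged into one kernel-verified Lean document; each statement's English description precedes it below -/
import Mathlib

section
/- Let H be a complex Hilbert space and let A be a closed, densely defined (possibly unbounded) linear operator in H with domain D(A). Let (C_n) be a sequence of bounded linear operators on H and C a bounded linear operator on H such that C_n x ∈ D(A) for every n ∈ ℕ and every x ∈ H, and suppose there is a constant M ≥ 0 with ‖A(C_n x)‖ ≤ M‖x‖ for all n and all x ∈ H. If C_n converges to C in the weak operator topology, i.e. ⟨y, C_n x⟩ → ⟨y, C x⟩ for all x, y ∈ H, then C x ∈ D(A) for every x ∈ H and ⟨y, A(C_n x)⟩ → ⟨y, A(C x)⟩ for all x, y ∈ H. -/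
/-!
For a closed densely defined `A`, the adjoint `A†` is densely defined and `A` is recovered from
it: `(u, w)` lies in the graph of `A` as soon as `⟪b, w⟫ = ⟪A† b, u⟫` for all `b ∈ D(A†)`, since
the orthogonal complement of the graph consists of the pairs `(-A† b, b)`. Testing the weak limit
against `b ∈ D(A†)` gives `|⟪A† b, C x⟫| ≤ M ‖x‖ ‖b‖`, so `C x ∈ D(A††) = D(A)`; and
`⟪b, A C_n x⟫ = ⟪A† b, C_n x⟫ → ⟪b, A C x⟫` on the dense set `D(A†)` extends to all `y` because the
sequence `A C_n x` is bounded.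
-/

open Filter Topology
open scoped InnerProductSpace LinearPMap

theorem tendsto_inner_of_dense {𝕜 E ι : Type*} [RCLike 𝕜] [NormedAddCommGroup E]
    [InnerProductSpace 𝕜 E] {l : Filter ι} {v : ι → E} {v₀ : E} {K : ℝ}
    (hv : ∀ i, ‖v i‖ ≤ K) {S : Set E} (hS : Dense S)
    (h : ∀ y ∈ S, Tendsto (fun i => ⟪y, v i⟫_𝕜) l (𝓝 ⟪y, v₀⟫_𝕜)) (y : E) :
    Tendsto (fun i => ⟪y, v i⟫_𝕜) l (𝓝 ⟪y, v₀⟫_𝕜) := by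
  have hbound : ∃ C, ∀ i y, ‖innerSLFlip 𝕜 (v i) y‖ ≤ C * ‖y‖ := ⟨K, fun i y => calc
    ‖⟪y, v i⟫_𝕜‖ ≤ ‖y‖ * ‖v i‖ := norm_inner_le_norm _ _
    _ ≤ K * ‖y‖ := by rw [mul_comm]; exact mul_le_mul_of_nonneg_right (hv i) (norm_nonneg _)⟩
  have hequi := ((NormedSpace.equicontinuous_TFAE fun i => innerSLFlip 𝕜 (v i)).out 3 1).1 hbound
  have hclosed := hequi.isClosed_setOfPred_tendsto (l := l) (innerSLFlip 𝕜 v₀).continuous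
  have hsub := hclosed.closure_subset_iff.2 h
  rw [hS.closure_eq] at hsub
  exact hsub (Set.mem_univ y)

namespace LinearPMap

variable {𝕜 E F : Type*} [RCLike 𝕜] [NormedAddCommGroup E] [InnerProductSpace 𝕜 E]
  [NormedAddCommGroup F] [InnerProductSpace 𝕜 F] [CompleteSpace E] [CompleteSpace F]
  {T : E →ₗ.[𝕜] F}

theorem mem_graph_of_forall_inner_adjoint (hT : T.IsClosed) (hd : Dense (T.domain : Set E))
    {u : E} {w : F} (h : ∀ b : T†.domain, ⟪(b : F), w⟫_𝕜 = ⟪T† b, u⟫_𝕜) : (u, w) ∈ T.graph := by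
  let G : Submodule 𝕜 (WithLp 2 (E × F)) :=
    T.graph.comap (WithLp.linearEquiv 2 𝕜 (E × F)).toLinearMap
  have : CompleteSpace G :=
    (hT.preimage (WithLp.prodContinuousLinearEquiv 2 𝕜 E F).continuous).completeSpace_coe
  suffices WithLp.toLp 2 (u, w) ∈ Gᗮᗮ by rwa [Submodule.orthogonal_orthogonal] at this
  intro p hp
  have hadj : (p.snd, -p.fst) ∈ T†.graph := by
    rw [adjoint_graph_eq_graph_adjoint hd, Submodule.mem_adjoint_iff]
    intro a b hab
    have := hp (WithLp.toLp 2 (a, b)) hab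
    rw [WithLp.prod_inner_apply] at this
    change ⟪b, p.snd⟫_𝕜 - ⟪a, -p.fst⟫_𝕜 = 0
    rw [inner_neg_right, sub_neg_eq_add, add_comm]
    exact this
  obtain ⟨b, hb, hTb⟩ := T†.mem_graph_iff.1 hadj
  dsimp only at hb hTb
  change ⟪p.fst, u⟫_𝕜 + ⟪p.snd, w⟫_𝕜 = 0
  rw [← hb, h b, hTb, inner_neg_left, add_neg_cancel]

theorem dense_adjoint_domain (hT : T.IsClosed) (hd : Dense (T.domain : Set E)) :
    Dense (T†.domain : Set F) := by
  rw [Submodule.dense_iff_topologicalClosure_eq_top, Submodule.topologicalClosure_eq_top_iff,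
    Submodule.eq_bot_iff]
  intro v hv
  refine T.graph_fst_eq_zero_snd (mem_graph_of_forall_inner_adjoint hT hd fun b => ?_) rfl
  rw [inner_zero_right]
  exact (Submodule.mem_orthogonal _ _).1 hv b b.2

theorem mem_domain_of_norm_inner_adjoint_le (hT : T.IsClosed) (hd : Dense (T.domain : Set E))
    {u : E} {K : ℝ} (h : ∀ b : T†.domain, ‖⟪T† b, u⟫_𝕜‖ ≤ K * ‖(b : F)‖) : u ∈ T.domain := by
  have hu : u ∈ T††.domain := by
    rw [mem_adjoint_domain_iff]
    refine AddMonoidHomClass.continuous_of_bound _ K fun b => ?_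
    change ‖⟪u, T† b⟫_𝕜‖ ≤ K * ‖(b : F)‖
    rw [← inner_conj_symm, RCLike.norm_conj]
    exact h b
  refine mem_domain_of_mem_graph (y := T†† ⟨u, hu⟩)
    (mem_graph_of_forall_inner_adjoint hT hd fun b => ?_)
  rw [← inner_conj_symm, adjoint_isFormalAdjoint (dense_adjoint_domain hT hd), inner_conj_symm]

end LinearPMap

theorem statement_0_general {H : Type*} [NormedAddCommGroup H] [InnerProductSpace ℂ H]
    [CompleteSpace H] (A : H →ₗ.[ℂ] H)
    (hAclosed : A.IsClosed) (hAdense : Dense (A.domain : Set H))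
    (C : ℕ → H →L[ℂ] H) (Clim : H →L[ℂ] H)
    (hmem : ∀ (n : ℕ) (x : H), C n x ∈ A.domain)
    (M : ℝ)
    (hbound : ∀ (n : ℕ) (x : H), ‖A ⟨C n x, hmem n x⟩‖ ≤ M * ‖x‖)
    (hweak : ∀ x y : H,
      Tendsto (fun n => ⟪y, C n x⟫_ℂ) atTop (nhds ⟪y, Clim x⟫_ℂ)) :
    ∃ hmem' : ∀ x : H, Clim x ∈ A.domain,
      ∀ x y : H,
        Tendsto (fun n => ⟪y, A ⟨C n x, hmem n x⟩⟫_ℂ) atTop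
          (nhds ⟪y, A ⟨Clim x, hmem' x⟩⟫_ℂ) := by
  have hadj := LinearPMap.adjoint_isFormalAdjoint hAdense
  have hmem' : ∀ x, Clim x ∈ A.domain := fun x =>
    LinearPMap.mem_domain_of_norm_inner_adjoint_le hAclosed hAdense (K := M * ‖x‖) fun b =>
      le_of_tendsto' (hweak x (A† b)).norm fun n => calc
        ‖⟪A† b, C n x⟫_ℂ‖ = ‖⟪(b : H), A ⟨C n x, hmem n x⟩⟫_ℂ‖ := by rw [hadj b ⟨C n x, hmem n x⟩]
        _ ≤ ‖(b : H)‖ * (M * ‖x‖) :=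
          (norm_inner_le_norm _ _).trans (mul_le_mul_of_nonneg_left (hbound n x) (norm_nonneg _))
        _ = M * ‖x‖ * ‖(b : H)‖ := mul_comm _ _
  refine ⟨hmem', fun x => tendsto_inner_of_dense (hbound · x)
    (LinearPMap.dense_adjoint_domain hAclosed hAdense) fun y hy => ?_⟩
  simpa only [fun n => hadj ⟨y, hy⟩ ⟨C n x, hmem n x⟩, hadj ⟨y, hy⟩ ⟨Clim x, hmem' x⟩] using
    hweak x (A† ⟨y, hy⟩)

/-- Let `A` be a closed densely defined operator in a complex Hilbert space `H`, `(C_n)`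
bounded operators with `C_n x ∈ D(A)` and `‖A C_n x‖ ≤ M‖x‖`. If `C_n → C` in the weak
operator topology, then `C x ∈ D(A)` for all `x` and `A C_n → A C` weakly. -/
theorem statement_0 {H : Type*} [NormedAddCommGroup H] [InnerProductSpace ℂ H]
    [CompleteSpace H] (A : H →ₗ.[ℂ] H)
    (hAclosed : A.IsClosed) (hAdense : Dense (A.domain : Set H))
    (C : ℕ → H →L[ℂ] H) (Clim : H →L[ℂ] H)
    (hmem : ∀ (n : ℕ) (x : H), C n x ∈ A.domain)
    (M : ℝ) (hM : 0 ≤ M)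
    (hbound : ∀ (n : ℕ) (x : H), ‖A ⟨C n x, hmem n x⟩‖ ≤ M * ‖x‖)
    (hweak : ∀ x y : H,
      Tendsto (fun n => ⟪y, C n x⟫_ℂ) atTop (nhds ⟪y, Clim x⟫_ℂ)) :
    ∃ hmem' : ∀ x : H, Clim x ∈ A.domain,
      ∀ x y : H,
        Tendsto (fun n => ⟪y, A ⟨C n x, hmem n x⟩⟫_ℂ) atTop
          (nhds ⟪y, A ⟨Clim x, hmem' x⟩⟫_ℂ) :=
  statement_0_general A hAclosed hAdense C Clim hmem M hbound hweak
end

section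
/- Let H be a complex Hilbert space and let A be a closed, densely defined (possibly unbounded) linear operator in H with domain D(A). Let (C_n) be a sequence of bounded linear operators on H and C a bounded linear operator on H such that C_n x ∈ D(A) for every n ∈ ℕ and every x ∈ H, and suppose there is a constant M ≥ 0 with ‖A(C_n x)‖ ≤ M‖x‖ for all n and all x ∈ H; in particular x ↦ A(C_n x) is a bounded operator, denoted A∘C_n. If the adjoints C_n* converge to C* in the strong operator topology, i.e. C_n* x → C* x in norm for every x ∈ H, then C x ∈ D(A) for every x ∈ H, x ↦ A(C x) is a bounded operator A∘C, and (A∘C_n)* converges to (A∘C)* in the strong operator topology. -/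
/-!
On `D(A*)`, which is dense because `A` is closed, `(A C_n)* = C_n* A*`, so the
uniformly bounded sequence `(A C_n)*` converges strongly on a dense set and hence everywhere, to
some `S`. Pairing with vectors orthogonal to the graph of `A` shows that `(C x, S* x)` is a weak
limit of the graph points `(C_n x, A C_n x)`; a closed subspace is weakly closed, so
`C x ∈ D(A)` and `A C x = S* x`.
-/

open Filter Topology
open scoped InnerProductSpace

section StrongLimit

variable {𝕜 E F : Type*} [NontriviallyNormedField 𝕜] [NormedAddCommGroup E] [NormedSpace 𝕜 E]
  [NormedAddCommGroup F] [NormedSpace 𝕜 F]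

theorem ContinuousLinearMap.cauchySeq_apply_of_dense {ι : Type*} [Nonempty ι] [SemilatticeSup ι]
    {f : ι → E →L[𝕜] F} {M : ℝ} (hf : ∀ i, ‖f i‖ ≤ M) {s : Set E} (hs : Dense s)
    (h : ∀ y ∈ s, CauchySeq fun i => f i y) (x : E) : CauchySeq fun i => f i x := by
  rw [Metric.cauchySeq_iff]
  intro ε hε
  have hM : 0 ≤ M := (norm_nonneg _).trans (hf (Classical.arbitrary ι))
  obtain ⟨y, hy, hxy⟩ := hs.exists_dist_lt x (show 0 < ε / (3 * (M + 1)) by positivity)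
  obtain ⟨N, hN⟩ := Metric.cauchySeq_iff.1 (h y hy) (ε / 3) (by positivity)
  have hclose : ∀ i, dist (f i x) (f i y) < ε / 3 := fun i =>
    calc dist (f i x) (f i y) ≤ ‖f i‖ * dist x y := (f i).dist_le_opNorm x y
      _ ≤ (M + 1) * dist x y := by gcongr; linarith [hf i]
      _ < (M + 1) * (ε / (3 * (M + 1))) := by gcongr
      _ = ε / 3 := by field_simp
  refine ⟨N, fun m hm n hn => ?_⟩
  calc dist (f m x) (f n x)
      ≤ dist (f m x) (f m y) + dist (f m y) (f n y) + dist (f n y) (f n x) := dist_triangle4 ..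
    _ < ε / 3 + ε / 3 + ε / 3 := by
        rw [dist_comm (f n y)]
        linarith [hclose m, hclose n, hN m hm n hn]
    _ = ε := by ring

theorem ContinuousLinearMap.exists_tendsto_apply_of_dense [CompleteSpace E] [CompleteSpace F]
    {f : ℕ → E →L[𝕜] F} {M : ℝ} (hf : ∀ n, ‖f n‖ ≤ M) {s : Set E} (hs : Dense s)
    (h : ∀ y ∈ s, CauchySeq fun n => f n y) :
    ∃ g : E →L[𝕜] F, ∀ x, Tendsto (fun n => f n x) atTop (𝓝 (g x)) := by
  choose g hg using fun x => cauchySeq_tendsto_of_complete (cauchySeq_apply_of_dense hf hs h x)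
  exact ⟨continuousLinearMapOfTendsto f (tendsto_pi_nhds.2 hg), hg⟩

end StrongLimit

namespace LinearPMap

variable {𝕜 E F G : Type*} [RCLike 𝕜] [NormedAddCommGroup E] [InnerProductSpace 𝕜 E]
  [NormedAddCommGroup F] [InnerProductSpace 𝕜 F] [NormedAddCommGroup G] [InnerProductSpace 𝕜 G]
  {A : E →ₗ.[𝕜] F}

theorem IsClosed.mem_graph_of_inner_eq_zero [CompleteSpace E] [CompleteSpace F]
    (hA : A.IsClosed) {x : E} {y : F}
    (h : ∀ (a : E) (b : F), (∀ u v, (u, v) ∈ A.graph → ⟪a, u⟫_𝕜 + ⟪b, v⟫_𝕜 = 0) →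
      ⟪a, x⟫_𝕜 + ⟪b, y⟫_𝕜 = 0) :
    (x, y) ∈ A.graph := by
  set Γ : Submodule 𝕜 (WithLp 2 (E × F)) :=
    A.graph.comap (WithLp.linearEquiv 2 𝕜 (E × F)).toLinearMap
  have hΓ : _root_.IsClosed (Γ : Set (WithLp 2 (E × F))) :=
    hA.preimage (WithLp.prod_continuous_ofLp 2 E F)
  have : CompleteSpace Γ := hΓ.completeSpace_coe
  change WithLp.toLp 2 (x, y) ∈ Γ
  rw [← Γ.orthogonal_orthogonal, Submodule.mem_orthogonal]
  intro w hw
  exact h (WithLp.ofLp w).1 (WithLp.ofLp w).2 fun u v huv =>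
    Submodule.inner_left_of_mem_orthogonal (K := Γ) huv hw

theorem IsClosed.dense_adjoint_domain [CompleteSpace E] [CompleteSpace F] (hA : A.IsClosed) :
    Dense (A†.domain : Set F) := by
  rw [Submodule.dense_iff_topologicalClosure_eq_top, Submodule.topologicalClosure_eq_top_iff,
    Submodule.eq_bot_iff]
  intro z hz
  refine A.graph_fst_eq_zero_snd (hA.mem_graph_of_inner_eq_zero fun a b hab => ?_) rfl
  have hb : b ∈ A†.domain := mem_adjoint_domain_of_exists b
    ⟨-a, fun u => by rw [inner_neg_left, neg_eq_iff_add_eq_zero]; exact hab u (A u) (A.mem_graph u)⟩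
  rw [inner_zero_right, zero_add]
  exact Submodule.inner_right_of_mem_orthogonal hb hz

theorem IsClosed.mem_graph_of_tendsto_inner [CompleteSpace E] [CompleteSpace F]
    (hA : A.IsClosed) {ι : Type*} {l : Filter ι} [l.NeBot] {p : ι → E × F}
    (hp : ∀ i, p i ∈ A.graph) {x : E} {y : F}
    (hx : ∀ a, Tendsto (fun i => ⟪a, (p i).1⟫_𝕜) l (𝓝 ⟪a, x⟫_𝕜))
    (hy : ∀ b, Tendsto (fun i => ⟪b, (p i).2⟫_𝕜) l (𝓝 ⟪b, y⟫_𝕜)) :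
    (x, y) ∈ A.graph :=
  hA.mem_graph_of_inner_eq_zero fun a b hab =>
    tendsto_nhds_unique ((hx a).add (hy b))
      (tendsto_const_nhds.congr fun i => (hab _ _ (hp i)).symm)

theorem adjoint_comp_apply [CompleteSpace E] [CompleteSpace F] [CompleteSpace G]
    (hA : Dense (A.domain : Set E)) {C : G →L[𝕜] E} {T : G →L[𝕜] F}
    (hC : ∀ x, C x ∈ A.domain) (hT : ∀ x, T x = A ⟨C x, hC x⟩) (y : A†.domain) :
    ContinuousLinearMap.adjoint T y = ContinuousLinearMap.adjoint C (A† y) := by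
  refine ext_inner_right 𝕜 fun v => ?_
  rw [ContinuousLinearMap.adjoint_inner_left, ContinuousLinearMap.adjoint_inner_left, hT]
  exact (adjoint_isFormalAdjoint hA y ⟨C v, hC v⟩).symm

end LinearPMap

/-- Let `A` be a closed densely defined operator in a complex Hilbert space `H`, `(C_n)`
bounded operators with `C_n x ∈ D(A)` and `‖A C_n x‖ ≤ M‖x‖`, and `T n = A ∘ C_n` the
corresponding bounded operators. If `C_n* → C*` strongly, then `C x ∈ D(A)` for all `x`,
`A ∘ C` is a bounded operator `T∞`, and `(A ∘ C_n)* → (A ∘ C)*` strongly. -/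
theorem statement_1 {H : Type*} [NormedAddCommGroup H] [InnerProductSpace ℂ H]
    [CompleteSpace H] (A : H →ₗ.[ℂ] H)
    (hAclosed : A.IsClosed) (hAdense : Dense (A.domain : Set H))
    (C : ℕ → H →L[ℂ] H) (Clim : H →L[ℂ] H)
    (hmem : ∀ (n : ℕ) (x : H), C n x ∈ A.domain)
    (M : ℝ) (hM : 0 ≤ M)
    (hbound : ∀ (n : ℕ) (x : H), ‖A ⟨C n x, hmem n x⟩‖ ≤ M * ‖x‖)
    (T : ℕ → H →L[ℂ] H)
    (hT : ∀ (n : ℕ) (x : H), T n x = A ⟨C n x, hmem n x⟩)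
    (hstar : ∀ x : H,
      Tendsto (fun n => ContinuousLinearMap.adjoint (C n) x) atTop
        (nhds (ContinuousLinearMap.adjoint Clim x))) :
    ∃ (hmem' : ∀ x : H, Clim x ∈ A.domain) (Tlim : H →L[ℂ] H),
      (∀ x : H, Tlim x = A ⟨Clim x, hmem' x⟩) ∧
      ∀ x : H,
        Tendsto (fun n => ContinuousLinearMap.adjoint (T n) x) atTop
          (nhds (ContinuousLinearMap.adjoint Tlim x)) := by
  have hTadj_bound : ∀ n, ‖ContinuousLinearMap.adjoint (T n)‖ ≤ M := fun n => by
    rw [LinearIsometryEquiv.norm_map]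
    exact ContinuousLinearMap.opNorm_le_bound _ hM fun x => hT n x ▸ hbound n x
  obtain ⟨S, hS⟩ := ContinuousLinearMap.exists_tendsto_apply_of_dense hTadj_bound
    hAclosed.dense_adjoint_domain fun y hy => by
      simpa only [A.adjoint_comp_apply hAdense (hmem _) (hT _) ⟨y, hy⟩] using (hstar _).cauchySeq
  have hgraph : ∀ x, (Clim x, ContinuousLinearMap.adjoint S x) ∈ A.graph := fun x =>
    hAclosed.mem_graph_of_tendsto_inner (𝕜 := ℂ) (l := atTop) (p := fun n => (C n x, T n x))
      (fun n => hT n x ▸ A.mem_graph ⟨C n x, hmem n x⟩)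
      (fun a => by
        simpa only [ContinuousLinearMap.adjoint_inner_left]
          using (hstar a).inner (𝕜 := ℂ) (tendsto_const_nhds (x := x)))
      (fun b => by
        simpa only [ContinuousLinearMap.adjoint_inner_left, ContinuousLinearMap.adjoint_inner_right]
          using (hS b).inner (𝕜 := ℂ) (tendsto_const_nhds (x := x)))
  refine ⟨fun x => LinearPMap.mem_domain_of_mem_graph (hgraph x), ContinuousLinearMap.adjoint S,
    fun x => (LinearPMap.image_iff _).2 (hgraph x), ?_⟩
  simpa only [ContinuousLinearMap.adjoint_adjoint] using hS
end

section
/- Let H be a complex Hilbert space and let U : ℝ → B(H) satisfy: each U(t) is unitary, U(0) = 1, and U(s+t) = U(s)U(t) for all s, t ∈ ℝ. Let A and B be (possibly unbounded) linear operators in H with domains D(A), D(B), where A is symmetric, i.e. ⟨Aψ, φ⟩ = ⟨ψ, Aφ⟩ for all ψ, φ ∈ D(A). Let D ⊆ D(B) be a subset such that for every χ ∈ D: (i) U(t)χ ∈ D(A) for all t ∈ ℝ; (ii) the map t ↦ A(U(t)χ) is continuous; (iii) for every t ∈ ℝ, the map s ↦ U(s)χ is differentiable at t with derivative i·U(t)(Bχ).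 Then for all ψ, φ ∈ D the function f(t) = ⟨U(t)ψ, A(U(t)φ)⟩ is continuously differentiable on ℝ with derivative f'(t) = i(⟨A(U(t)ψ), U(t)(Bφ)⟩ − ⟨U(t)(Bψ), A(U(t)φ)⟩). -/
/-!
Since `A` is symmetric, the increment `⟪U s ψ, A U s φ⟫ - ⟪U t ψ, A U t φ⟫` splits as
`⟪U s ψ - U t ψ, A U s φ⟫ + ⟪A U t ψ, U s φ - U t φ⟫`, so differentiating it needs only the
continuity of `s ↦ A U s φ`, not its differentiability. For the continuity of the derivative one
needs `t ↦ U t (B χ)` continuous: the difference quotients of `t ↦ U t χ` at time `t` are the images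
under the isometry `U t` of those at time `0`, so they converge uniformly in `t`.
-/

open scoped InnerProductSpace Topology
open Filter

theorem continuous_of_tendstoUniformly_slope {E : Type*} [NormedAddCommGroup E] [NormedSpace ℝ E]
    {f f' : ℝ → E} (hf : Continuous f)
    (hlim : TendstoUniformly (fun h t => h⁻¹ • (f (t + h) - f t)) f' (𝓝[≠] 0)) :
    Continuous f' :=
  hlim.continuous (Eventually.frequently (.of_forall fun _ => by fun_prop))

theorem Filter.Tendsto.tendstoUniformly_isometry_apply {ι α β γ : Type*} [PseudoMetricSpace α]
    [PseudoMetricSpace β] {U : ι → α → β} (hU : ∀ i, Isometry (U i)) {w : γ → α} {l : Filter γ}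
    {v : α} (hw : Tendsto w l (𝓝 v)) :
    TendstoUniformly (fun a i => U i (w a)) (fun i => U i v) l := by
  rw [Metric.tendstoUniformly_iff]
  intro ε hε
  filter_upwards [Metric.tendsto_nhds.1 hw ε hε] with a ha i
  rwa [(hU i).dist_eq, dist_comm]

section OneParameterGroup

variable {𝕜 E : Type*} [RCLike 𝕜] [NormedAddCommGroup E] [NormedSpace 𝕜 E] [NormedSpace ℝ E]
  [IsScalarTower ℝ 𝕜 E] {U : ℝ → E →L[𝕜] E}

theorem continuous_apply_of_hasDerivAt_zero (hU : ∀ t, Isometry (U t))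
    (hadd : ∀ s t, U (s + t) = U s * U t) {χ v : E} (hχ : Continuous fun t => U t χ)
    (hv : HasDerivAt (fun t => U t χ) v 0) : Continuous fun t => U t v := by
  refine continuous_of_tendstoUniformly_slope hχ ?_
  have hslope : Tendsto (fun h : ℝ => h⁻¹ • (U h χ - U 0 χ)) (𝓝[≠] 0) (𝓝 v) := by
    simpa using hv.tendsto_slope_zero
  convert hslope.tendstoUniformly_isometry_apply hU using 3 with h t
  rw [ContinuousLinearMap.map_smul_of_tower, map_sub, ← mul_apply_eq_comp, ← mul_apply_eq_comp,
    ← hadd, ← hadd, add_zero]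

end OneParameterGroup

theorem hasDerivAt_inner_apply_of_isFormalAdjoint {H : Type*} [NormedAddCommGroup H]
    [InnerProductSpace ℂ H] {A : H →ₗ.[ℂ] H} (hA : A.IsFormalAdjoint A) {x y : ℝ → A.domain}
    {x' y' : H} {t : ℝ} (hx : HasDerivAt (fun s => (x s : H)) x' t)
    (hy : HasDerivAt (fun s => (y s : H)) y' t) (hAy : ContinuousAt (fun s => A (y s)) t) :
    HasDerivAt (fun s => ⟪(x s : H), A (y s)⟫_ℂ) (⟪x', A (y t)⟫_ℂ + ⟪A (x t), y'⟫_ℂ) t := by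
  rw [hasDerivAt_iff_tendsto_slope]
  have hslope : ∀ s, slope (fun s => ⟪(x s : H), A (y s)⟫_ℂ) t s =
      ⟪slope (fun s => (x s : H)) t s, A (y s)⟫_ℂ + ⟪A (x t), slope (fun s => (y s : H)) t s⟫_ℂ := by
    intro s
    simp only [slope_def_module, RCLike.real_smul_eq_coe_smul (K := ℂ), inner_smul_left,
      inner_smul_right, RCLike.conj_ofReal, smul_eq_mul]
    rw [inner_sub_left, inner_sub_right, hA, hA]
    ring
  refine Tendsto.congr (fun s => (hslope s).symm) ?_
  exact (hx.tendsto_slope.inner (hAy.tendsto.mono_left nhdsWithin_le_nhds)).add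
    (tendsto_const_nhds.inner hy.tendsto_slope)

theorem statement_2_general {H : Type*} [NormedAddCommGroup H] [InnerProductSpace ℂ H]
    [CompleteSpace H] (U : ℝ → H →L[ℂ] H)
    (hunitary : ∀ t, U t ∈ unitary (H →L[ℂ] H))
    (hUadd : ∀ s t : ℝ, U (s + t) = U s * U t)
    (A B : H →ₗ.[ℂ] H)
    (hAsymm : ∀ ψ φ : A.domain, ⟪A ψ, (φ : H)⟫_ℂ = ⟪(ψ : H), A φ⟫_ℂ)
    (D : Set H) (hDB : D ⊆ (B.domain : Set H))
    (hUA : ∀ χ, ∀ _ : χ ∈ D, ∀ t : ℝ, U t χ ∈ A.domain)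
    (hcont : ∀ χ, ∀ hχ : χ ∈ D, Continuous fun t : ℝ => A ⟨U t χ, hUA χ hχ t⟩)
    (hderiv : ∀ χ, ∀ hχ : χ ∈ D, ∀ t : ℝ,
      HasDerivAt (fun s : ℝ => U s χ) (Complex.I • U t (B ⟨χ, hDB hχ⟩)) t) :
    ∀ ψ, ∀ hψ : ψ ∈ D, ∀ φ, ∀ hφ : φ ∈ D,
      (∀ t : ℝ,
        HasDerivAt (fun s : ℝ => ⟪U s ψ, A ⟨U s φ, hUA φ hφ s⟩⟫_ℂ)
          (Complex.I * (⟪A ⟨U t ψ, hUA ψ hψ t⟩, U t (B ⟨φ, hDB hφ⟩)⟫_ℂ -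
            ⟪U t (B ⟨ψ, hDB hψ⟩), A ⟨U t φ, hUA φ hφ t⟩⟫_ℂ)) t) ∧
      Continuous (fun t : ℝ =>
        Complex.I * (⟪A ⟨U t ψ, hUA ψ hψ t⟩, U t (B ⟨φ, hDB hφ⟩)⟫_ℂ -
          ⟪U t (B ⟨ψ, hDB hψ⟩), A ⟨U t φ, hUA φ hφ t⟩⟫_ℂ)) := by
  have hiso : ∀ t, Isometry (U t) := fun t =>
    AddMonoidHomClass.isometry_of_norm _ (ContinuousLinearMap.norm_map_of_mem_unitary (hunitary t))
  have hUB : ∀ χ (hχ : χ ∈ D), Continuous fun t => U t (B ⟨χ, hDB hχ⟩) := by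
    intro χ hχ
    have hχc : Continuous fun t => U t χ :=
      continuous_iff_continuousAt.2 fun t => (hderiv χ hχ t).continuousAt
    have := continuous_apply_of_hasDerivAt_zero hiso hUadd hχc (hderiv χ hχ 0)
    simp only [map_smul, ← mul_apply_eq_comp, ← hUadd, add_zero] at this
    exact (continuous_const_smul_iff₀ Complex.I_ne_zero).1 this
  intro ψ hψ φ hφ
  refine ⟨fun t => ?_, ?_⟩
  · refine (hasDerivAt_inner_apply_of_isFormalAdjoint hAsymm (x := fun s => ⟨U s ψ, hUA ψ hψ s⟩)
      (y := fun s => ⟨U s φ, hUA φ hφ s⟩) (hderiv ψ hψ t) (hderiv φ hφ t)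
      (hcont φ hφ).continuousAt).congr_deriv ?_
    simp only [inner_smul_left, inner_smul_right, Complex.conj_I]
    ring
  · exact continuous_const.mul
      (((hcont ψ hψ).inner (hUB φ hφ)).sub ((hUB ψ hψ).inner (hcont φ hφ)))

/-- Let `U : ℝ → B(H)` be a one-parameter group of unitaries, `A` a symmetric unbounded
operator, `B` an unbounded operator, and `D ⊆ D(B)` such that for `χ ∈ D`: `U(t)χ ∈ D(A)`,
`t ↦ A U(t)χ` is continuous, and `s ↦ U(s)χ` is differentiable with derivative
`i U(t) Bχ`. Then for `ψ, φ ∈ D` the function `f(t) = ⟨U(t)ψ, A U(t)φ⟩` is continuously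
differentiable with `f'(t) = i(⟨A U(t)ψ, U(t)Bφ⟩ − ⟨U(t)Bψ, A U(t)φ⟩)`. -/
theorem statement_2 {H : Type*} [NormedAddCommGroup H] [InnerProductSpace ℂ H]
    [CompleteSpace H] (U : ℝ → H →L[ℂ] H)
    (hunitary : ∀ t, U t ∈ unitary (H →L[ℂ] H))
    (hU0 : U 0 = 1) (hUadd : ∀ s t : ℝ, U (s + t) = U s * U t)
    (A B : H →ₗ.[ℂ] H)
    (hAsymm : ∀ ψ φ : A.domain, ⟪A ψ, (φ : H)⟫_ℂ = ⟪(ψ : H), A φ⟫_ℂ)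
    (D : Set H) (hDB : D ⊆ (B.domain : Set H))
    (hUA : ∀ χ, ∀ _ : χ ∈ D, ∀ t : ℝ, U t χ ∈ A.domain)
    (hcont : ∀ χ, ∀ hχ : χ ∈ D, Continuous fun t : ℝ => A ⟨U t χ, hUA χ hχ t⟩)
    (hderiv : ∀ χ, ∀ hχ : χ ∈ D, ∀ t : ℝ,
      HasDerivAt (fun s : ℝ => U s χ) (Complex.I • U t (B ⟨χ, hDB hχ⟩)) t) :
    ∀ ψ, ∀ hψ : ψ ∈ D, ∀ φ, ∀ hφ : φ ∈ D,
      (∀ t : ℝ,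
        HasDerivAt (fun s : ℝ => ⟪U s ψ, A ⟨U s φ, hUA φ hφ s⟩⟫_ℂ)
          (Complex.I * (⟪A ⟨U t ψ, hUA ψ hψ t⟩, U t (B ⟨φ, hDB hφ⟩)⟫_ℂ -
            ⟪U t (B ⟨ψ, hDB hψ⟩), A ⟨U t φ, hUA φ hφ t⟩⟫_ℂ)) t) ∧
      Continuous (fun t : ℝ =>
        Complex.I * (⟪A ⟨U t ψ, hUA ψ hψ t⟩, U t (B ⟨φ, hDB hφ⟩)⟫_ℂ -
          ⟪U t (B ⟨ψ, hDB hψ⟩), A ⟨U t φ, hUA φ hφ t⟩⟫_ℂ)) :=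
  statement_2_general U hunitary hUadd A B hAsymm D hDB hUA hcont hderiv
end

section
/- Let H be a complex Hilbert space, λ ∈ ℝ, and A a densely defined selfadjoint operator in H (A equals its adjoint as an unbounded operator) satisfying ⟨ψ, Aψ⟩ ≥ λ‖ψ‖² for all ψ ∈ D(A). Let B be a linear operator in H with D(A) ⊆ D(B) and suppose there is c ≥ 0 with ‖Bψ‖ ≤ c(‖Aψ‖ + ‖ψ‖) for all ψ ∈ D(A). Suppose that for every ε > 0 there is a bounded operator R_ε on H whose range is contained in D(A) and which satisfies A(R_ε x) + (ε − λ)·R_ε x = x for all x ∈ H and R_ε(Aψ + (ε − λ)ψ) = ψ for all ψ ∈ D(A). Let ν ≥ 1 and let ω : ℝ^ν → ℝ be continuous with ω(0) = 0 and ω(k) > 0 for all k ≠ 0. Then: (a) the eigenspace N = {ψ ∈ D(A) : Aψ = λψ} is a closed subspace of H (and N ⊆ D(B)); (b) for every bounded set Ω ⊆ ℝ^ν there is C_Ω ≥ 0 such that ‖B(ω(k)·R_{ω(k)}x)‖ ≤ C_Ω‖x‖ for all x ∈ H and all k ∈ Ω with k ≠ 0; (c) for every x ∈ H, B(ω(k)·R_{ω(k)}x)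 converges in norm to B(P x) as k → 0 with k ≠ 0, where P is the orthogonal projection of H onto N. -/
/-!
For `ψ ∈ D(A)` the lower bound `A ≥ λ` gives
`‖(A - λ + ε)ψ‖² ≥ ‖(A - λ)ψ‖² + ε²‖ψ‖²`, so `ε R_ε` and `(A - λ) R_ε` are contractions, and the
relative bound makes `B (ε R_ε)` uniformly bounded for bounded `ε`. The eigenspace
`N = ker (A - λ)` is the fixed space of `ε R_ε`, hence closed; since `R_ε` is symmetric,
`Nᗮ` is the closure of `ran (A - λ)`. On that range `ε R_ε (A - λ)ψ = εψ - ε² R_ε ψ → 0`, so by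
density and uniform boundedness `ε R_ε → P` strongly as `ε → 0⁺`. Finally
`(A - λ)(ε R_ε x - P x) = ε (A - λ) R_ε x`, so the relative bound controls
`B (ε R_ε x) - B (P x)` by `ε ‖x‖ + (|λ| + 1) ‖ε R_ε x - P x‖`, and `ω k → 0⁺` as `k → 0`.
-/

open scoped InnerProductSpace

open Filter Topology

theorem norm_sq_add_norm_sq_le_norm_add_sq {𝕜 E : Type*} [RCLike 𝕜] [NormedAddCommGroup E]
    [InnerProductSpace 𝕜 E] {u v : E} (h : 0 ≤ RCLike.re ⟪u, v⟫_𝕜) :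
    ‖u‖ ^ 2 + ‖v‖ ^ 2 ≤ ‖u + v‖ ^ 2 := by
  rw [norm_add_sq (𝕜 := 𝕜)]
  linarith

theorem tendsto_zero_of_mem_closure_of_norm_le {𝕜 E F ι : Type*} [NontriviallyNormedField 𝕜]
    [SeminormedAddCommGroup E] [NormedSpace 𝕜 E] [SeminormedAddCommGroup F] [NormedSpace 𝕜 F]
    {l : Filter ι} {T : ι → E →L[𝕜] F} {C : ℝ} (hT : ∀ᶠ i in l, ‖T i‖ ≤ C) {s : Set E}
    (hs : ∀ y ∈ s, Tendsto (T · y) l (𝓝 0)) {x : E} (hx : x ∈ closure s) :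
    Tendsto (T · x) l (𝓝 0) := by
  rw [Metric.tendsto_nhds]
  intro δ hδ
  obtain ⟨y, hys, hxy⟩ := Metric.mem_closure_iff.1 hx (δ / 2 / (|C| + 1)) (by positivity)
  rw [dist_eq_norm] at hxy
  filter_upwards [hT, Metric.tendsto_nhds.1 (hs y hys) (δ / 2) (by positivity)] with i hTi hyi
  rw [dist_zero_right] at hyi ⊢
  have hsmall : C * ‖x - y‖ ≤ δ / 2 := by
    calc C * ‖x - y‖ ≤ (|C| + 1) * (δ / 2 / (|C| + 1)) := by
          gcongr
          linarith [le_abs_self C]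
      _ = δ / 2 := by field_simp
  calc ‖T i x‖ = ‖T i (x - y) + T i y‖ := by rw [← map_add, sub_add_cancel]
    _ ≤ ‖T i‖ * ‖x - y‖ + ‖T i y‖ := norm_add_le_of_le ((T i).le_opNorm _) le_rfl
    _ ≤ C * ‖x - y‖ + ‖T i y‖ := by gcongr
    _ < δ := by linarith

theorem tendsto_nhdsGT_zero_of_pos {X : Type*} [TopologicalSpace X] {ω : X → ℝ} {a : X}
    (hω : ContinuousAt ω a) (ha : ω a = 0) (hpos : ∀ k, k ≠ a → 0 < ω k) :
    Tendsto ω (𝓝[≠] a) (𝓝[>] 0) :=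
  tendsto_nhdsWithin_of_tendsto_nhds_of_eventually_within _
    (ha ▸ hω.tendsto.mono_left nhdsWithin_le_nhds) (eventually_nhdsWithin_of_forall hpos)

namespace LinearPMap

section Eigenspace

variable {R E : Type*} [CommRing R] [AddCommGroup E] [Module R E]

def eigenspace (A : E →ₗ.[R] E) (μ : R) : Submodule R E :=
  (LinearMap.ker (A.toFun - μ • A.domain.subtype)).map A.domain.subtype

theorem mem_eigenspace_iff {A : E →ₗ.[R] E} {μ : R} {x : E} :
    x ∈ A.eigenspace μ ↔ ∃ h : x ∈ A.domain, A ⟨x, h⟩ = μ • x := by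
  simp [eigenspace, sub_eq_zero]

theorem eigenspace_le_domain (A : E →ₗ.[R] E) (μ : R) : A.eigenspace μ ≤ A.domain :=
  fun _ hx => (mem_eigenspace_iff.1 hx).1

end Eigenspace

theorem map_real_smul {H : Type*} [NormedAddCommGroup H] [InnerProductSpace ℂ H]
    (A : H →ₗ.[ℂ] H) (r : ℝ) (ψ : A.domain) : A (r • ψ) = r • A ψ :=
  A.toFun.map_smul_of_tower r ψ

end LinearPMap

theorem IsSelfAdjoint.isFormalAdjoint_self {𝕜 E : Type*} [RCLike 𝕜] [NormedAddCommGroup E]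
    [InnerProductSpace 𝕜 E] [CompleteSpace E] {A : E →ₗ.[𝕜] E} (hA : IsSelfAdjoint A) :
    A.IsFormalAdjoint A := by
  have h := LinearPMap.adjoint_isFormalAdjoint hA.dense_domain
  rwa [LinearPMap.isSelfAdjoint_def.1 hA] at h

section Resolvent

variable {H : Type*} [NormedAddCommGroup H] [InnerProductSpace ℂ H] {A : H →ₗ.[ℂ] H} {lam : ℝ}

theorem norm_sub_smul_sq_add_norm_smul_sq_le
    (hlb : ∀ ψ : A.domain, lam * ‖(ψ : H)‖ ^ 2 ≤ (⟪(ψ : H), A ψ⟫_ℂ).re)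
    (ψ : A.domain) {ε : ℝ} (hε : 0 ≤ ε) :
    ‖A ψ - lam • (ψ : H)‖ ^ 2 + ‖ε • (ψ : H)‖ ^ 2 ≤ ‖A ψ + (ε - lam) • (ψ : H)‖ ^ 2 := by
  have hsplit : A ψ + (ε - lam) • (ψ : H) = (A ψ - lam • (ψ : H)) + ε • (ψ : H) := by module
  rw [hsplit]
  refine norm_sq_add_norm_sq_le_norm_add_sq (𝕜 := ℂ) ?_
  have hre : RCLike.re ⟪A ψ - lam • (ψ : H), ε • (ψ : H)⟫_ℂ
      = ε * ((⟪(ψ : H), A ψ⟫_ℂ).re - lam * ‖(ψ : H)‖ ^ 2) := by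
    rw [inner_sub_left, ← Complex.coe_smul, ← Complex.coe_smul, inner_smul_left, inner_smul_right,
      inner_smul_right, inner_self_eq_norm_sq_to_K]
    have hsymm : (⟪A ψ, (ψ : H)⟫_ℂ).re = (⟪(ψ : H), A ψ⟫_ℂ).re := inner_re_symm (𝕜 := ℂ) _ _
    simp only [Complex.conj_ofReal, Complex.coe_algebraMap, ← Complex.ofReal_pow,
      RCLike.re_to_complex, Complex.sub_re, Complex.mul_re, Complex.ofReal_re, hsymm,
      Complex.ofReal_im, zero_mul, sub_zero, mul_zero, Complex.mul_im, add_zero]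
    ring
  rw [hre]
  exact mul_nonneg hε (sub_nonneg.2 (hlb ψ))

theorem norm_smul_resolvent_le
    (hlb : ∀ ψ : A.domain, lam * ‖(ψ : H)‖ ^ 2 ≤ (⟪(ψ : H), A ψ⟫_ℂ).re) {ε : ℝ} (hε : 0 ≤ ε)
    {T : H → H} (hT : ∀ x, T x ∈ A.domain) (hTright : ∀ x, A ⟨T x, hT x⟩ + (ε - lam) • T x = x)
    (x : H) : ‖ε • T x‖ ≤ ‖x‖ := by
  have h := norm_sub_smul_sq_add_norm_smul_sq_le hlb ⟨T x, hT x⟩ hε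
  simp only [hTright] at h
  exact (sq_le_sq₀ (norm_nonneg _) (norm_nonneg _)).1 (by nlinarith)

theorem norm_apply_resolvent_sub_smul_le
    (hlb : ∀ ψ : A.domain, lam * ‖(ψ : H)‖ ^ 2 ≤ (⟪(ψ : H), A ψ⟫_ℂ).re) {ε : ℝ} (hε : 0 ≤ ε)
    {T : H → H} (hT : ∀ x, T x ∈ A.domain) (hTright : ∀ x, A ⟨T x, hT x⟩ + (ε - lam) • T x = x)
    (x : H) : ‖A ⟨T x, hT x⟩ - lam • T x‖ ≤ ‖x‖ := by
  have h := norm_sub_smul_sq_add_norm_smul_sq_le hlb ⟨T x, hT x⟩ hε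
  simp only [hTright] at h
  exact (sq_le_sq₀ (norm_nonneg _) (norm_nonneg _)).1 (by nlinarith)

theorem inner_resolvent_comm (hsym : A.IsFormalAdjoint A) {μ : ℝ} {T : H → H}
    (hT : ∀ x, T x ∈ A.domain) (hTright : ∀ x, A ⟨T x, hT x⟩ + μ • T x = x) (u v : H) :
    ⟪T u, v⟫_ℂ = ⟪u, T v⟫_ℂ := by
  conv_lhs => rw [← hTright v]
  conv_rhs => rw [← hTright u]
  rw [inner_add_right, inner_add_left, ← Complex.coe_smul, ← Complex.coe_smul, inner_smul_right,
    inner_smul_left, Complex.conj_ofReal]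
  congr 1
  exact (hsym ⟨T u, hT u⟩ ⟨T v, hT v⟩).symm

theorem smul_resolvent_eq_self_iff {ε : ℝ} {T : H →L[ℂ] H} (hT : ∀ x, T x ∈ A.domain)
    (hTright : ∀ x, A ⟨T x, hT x⟩ + (ε - lam) • T x = x)
    (hTleft : ∀ ψ : A.domain, T (A ψ + (ε - lam) • (ψ : H)) = ψ) (x : H) :
    ε • T x = x ↔ x ∈ A.eigenspace (lam : ℂ) := by
  rw [LinearPMap.mem_eigenspace_iff, Complex.coe_smul]
  constructor
  · intro hx
    have hd : x ∈ A.domain := hx ▸ A.domain.smul_of_tower_mem ε (hT x)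
    refine ⟨hd, ?_⟩
    have hψ : (⟨x, hd⟩ : A.domain) = ε • ⟨T x, hT x⟩ := Subtype.ext hx.symm
    rw [hψ, A.map_real_smul, eq_sub_of_add_eq (hTright x)]
    calc ε • (x - (ε - lam) • T x) = ε • x - (ε - lam) • (ε • T x) := by module
      _ = lam • x := by rw [hx]; module
  · rintro ⟨hd, hAx⟩
    have h := hTleft ⟨x, hd⟩
    rwa [hAx, ← add_smul, add_sub_cancel, T.map_smul_of_tower] at h

theorem isClosed_eigenspace {ε : ℝ} {T : H →L[ℂ] H} (hT : ∀ x, T x ∈ A.domain)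
    (hTright : ∀ x, A ⟨T x, hT x⟩ + (ε - lam) • T x = x)
    (hTleft : ∀ ψ : A.domain, T (A ψ + (ε - lam) • (ψ : H)) = ψ) :
    IsClosed (A.eigenspace (lam : ℂ) : Set H) := by
  have h : (A.eigenspace (lam : ℂ) : Set H) = {x | ε • T x = x} :=
    Set.ext fun x => (smul_resolvent_eq_self_iff hT hTright hTleft x).symm
  rw [h]
  exact isClosed_eq (by fun_prop) continuous_id

theorem orthogonal_range_sub_le_eigenspace (hsym : A.IsFormalAdjoint A) {ε : ℝ}
    {T : H →L[ℂ] H} (hT : ∀ x, T x ∈ A.domain)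
    (hTright : ∀ x, A ⟨T x, hT x⟩ + (ε - lam) • T x = x)
    (hTleft : ∀ ψ : A.domain, T (A ψ + (ε - lam) • (ψ : H)) = ψ) :
    (LinearMap.range (A.toFun - (lam : ℂ) • A.domain.subtype))ᗮ ≤ A.eigenspace (lam : ℂ) := by
  intro z hz
  rw [← smul_resolvent_eq_self_iff hT hTright hTleft]
  have hperp : ∀ u : H, ⟪u, ε • T z - z⟫_ℂ = 0 := by
    intro u
    have hu : ε • T u - u = -(A ⟨T u, hT u⟩ - lam • T u) := by
      linear_combination (norm := module) hTright u
    have hrange : A ⟨T u, hT u⟩ - lam • T u ∈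
        LinearMap.range (A.toFun - (lam : ℂ) • A.domain.subtype) :=
      ⟨⟨T u, hT u⟩, by simp [Complex.coe_smul]⟩
    calc ⟪u, ε • T z - z⟫_ℂ = ⟪ε • T u - u, z⟫_ℂ := by
          rw [inner_sub_left, inner_sub_right, ← Complex.coe_smul, ← Complex.coe_smul,
            inner_smul_left, inner_smul_right, Complex.conj_ofReal,
            inner_resolvent_comm hsym hT hTright]
      _ = 0 := by rw [hu, inner_neg_left, (Submodule.mem_orthogonal _ _).1 hz _ hrange, neg_zero]
  exact sub_eq_zero.1 (inner_self_eq_zero.1 (hperp _))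

theorem norm_smul_resolvent_sub_le_of_relBound {B : H →ₗ.[ℂ] H} (hAB : A.domain ≤ B.domain) {c : ℝ}
    (hc : 0 ≤ c) (hrel : ∀ ψ : A.domain, ‖B ⟨(ψ : H), hAB ψ.2⟩‖ ≤ c * (‖A ψ‖ + ‖(ψ : H)‖))
    (hlb : ∀ ψ : A.domain, lam * ‖(ψ : H)‖ ^ 2 ≤ (⟪(ψ : H), A ψ⟫_ℂ).re) {ε : ℝ} (hε : 0 ≤ ε)
    {T : H → H} (hT : ∀ x, T x ∈ A.domain) (hTright : ∀ x, A ⟨T x, hT x⟩ + (ε - lam) • T x = x)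
    {p : H} (hpA : p ∈ A.domain) (hAp : A ⟨p, hpA⟩ = lam • p) (x : H) :
    ‖B ⟨ε • T x, hAB (A.domain.smul_of_tower_mem ε (hT x))⟩ - B ⟨p, hAB hpA⟩‖ ≤
      c * (ε * ‖x‖ + (|lam| + 1) * ‖ε • T x - p‖) := by
  set w : A.domain := ε • ⟨T x, hT x⟩ - ⟨p, hpA⟩
  have hAw : A w = ε • (A ⟨T x, hT x⟩ - lam • T x) + lam • (w : H) := by
    simp only [w, A.map_sub, A.map_real_smul, hAp, Submodule.coe_sub,
      Submodule.coe_smul_of_tower]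
    module
  have hAw_le : ‖A w‖ ≤ ε * ‖x‖ + |lam| * ‖(w : H)‖ := by
    rw [hAw]
    refine (norm_add_le _ _).trans ?_
    rw [norm_smul, norm_smul, Real.norm_of_nonneg hε, Real.norm_eq_abs]
    gcongr
    exact norm_apply_resolvent_sub_smul_le hlb hε hT hTright x
  calc ‖B ⟨ε • T x, _⟩ - B ⟨p, _⟩‖ = ‖B ⟨(w : H), hAB w.2⟩‖ := by rw [← B.map_sub]; rfl
    _ ≤ c * (‖A w‖ + ‖(w : H)‖) := hrel w
    _ ≤ c * (ε * ‖x‖ + (|lam| + 1) * ‖ε • T x - p‖) := by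
        gcongr c * ?_
        calc ‖A w‖ + ‖(w : H)‖ ≤ ε * ‖x‖ + |lam| * ‖(w : H)‖ + ‖(w : H)‖ := by gcongr
          _ = ε * ‖x‖ + (|lam| + 1) * ‖ε • T x - p‖ := by
              rw [show (w : H) = ε • T x - p from rfl]; ring

theorem norm_smul_resolvent_le_of_relBound {B : H →ₗ.[ℂ] H} (hAB : A.domain ≤ B.domain) {c : ℝ}
    (hc : 0 ≤ c) (hrel : ∀ ψ : A.domain, ‖B ⟨(ψ : H), hAB ψ.2⟩‖ ≤ c * (‖A ψ‖ + ‖(ψ : H)‖))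
    (hlb : ∀ ψ : A.domain, lam * ‖(ψ : H)‖ ^ 2 ≤ (⟪(ψ : H), A ψ⟫_ℂ).re) {ε : ℝ} (hε : 0 ≤ ε)
    {T : H → H} (hT : ∀ x, T x ∈ A.domain)
    (hTright : ∀ x, A ⟨T x, hT x⟩ + (ε - lam) • T x = x) (x : H) :
    ‖B ⟨ε • T x, hAB (A.domain.smul_of_tower_mem ε (hT x))⟩‖ ≤ c * (ε + |lam| + 1) * ‖x‖ := by
  have h := norm_smul_resolvent_sub_le_of_relBound hAB hc hrel hlb hε hT hTright
    A.domain.zero_mem (A.map_zero.trans (smul_zero lam).symm) x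
  have hB0 : B ⟨0, hAB A.domain.zero_mem⟩ = 0 := B.map_zero
  rw [hB0, sub_zero, sub_zero] at h
  calc _ ≤ c * (ε * ‖x‖ + (|lam| + 1) * ‖ε • T x‖) := h
    _ ≤ c * (ε * ‖x‖ + (|lam| + 1) * ‖x‖) := by
        gcongr
        exact norm_smul_resolvent_le hlb hε hT hTright x
    _ = c * (ε + |lam| + 1) * ‖x‖ := by ring

section Family

variable {R : ℝ → H →L[ℂ] H}

theorem tendsto_smul_resolvent_apply_sub_smul
    (hlb : ∀ ψ : A.domain, lam * ‖(ψ : H)‖ ^ 2 ≤ (⟪(ψ : H), A ψ⟫_ℂ).re)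
    (hRmem : ∀ ε : ℝ, 0 < ε → ∀ x : H, R ε x ∈ A.domain)
    (hRres : ∀ (ε : ℝ) (hε : 0 < ε) (x : H),
      A ⟨R ε x, hRmem ε hε x⟩ + (ε - lam) • R ε x = x)
    (hRres' : ∀ ε : ℝ, 0 < ε → ∀ ψ : A.domain, R ε (A ψ + (ε - lam) • (ψ : H)) = ψ) (ψ : A.domain) :
    Tendsto (fun ε => ε • R ε (A ψ - lam • (ψ : H))) (𝓝[>] 0) (𝓝 0) := by
  refine squeeze_zero_norm' (a := fun ε => 2 * ‖(ψ : H)‖ * ε) ?_ ?_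
  · filter_upwards [self_mem_nhdsWithin] with ε (hε : 0 < ε)
    have hsplit : A ψ - lam • (ψ : H) = (A ψ + (ε - lam) • (ψ : H)) - ε • (ψ : H) := by module
    rw [hsplit, map_sub, hRres' ε hε, (R ε).map_smul_of_tower, smul_sub]
    calc ‖ε • (ψ : H) - ε • ε • R ε ψ‖ ≤ ‖ε • (ψ : H)‖ + ‖ε • ε • R ε ψ‖ := norm_sub_le _ _
      _ ≤ ε * ‖(ψ : H)‖ + ε * ‖(ψ : H)‖ := by
          rw [norm_smul ε (ε • _), norm_smul, Real.norm_of_nonneg hε.le]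
          gcongr
          exact norm_smul_resolvent_le hlb hε.le (hRmem ε hε) (hRres ε hε) _
      _ = 2 * ‖(ψ : H)‖ * ε := by ring
  · exact tendsto_nhdsWithin_of_tendsto_nhds
      (by simpa using (continuous_const_mul (2 * ‖(ψ : H)‖)).tendsto (0 : ℝ))

variable [CompleteSpace H]

theorem tendsto_smul_resolvent_starProjection (hsym : A.IsFormalAdjoint A)
    (hlb : ∀ ψ : A.domain, lam * ‖(ψ : H)‖ ^ 2 ≤ (⟪(ψ : H), A ψ⟫_ℂ).re)
    (hRmem : ∀ ε : ℝ, 0 < ε → ∀ x : H, R ε x ∈ A.domain)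
    (hRres : ∀ (ε : ℝ) (hε : 0 < ε) (x : H),
      A ⟨R ε x, hRmem ε hε x⟩ + (ε - lam) • R ε x = x)
    (hRres' : ∀ ε : ℝ, 0 < ε → ∀ ψ : A.domain, R ε (A ψ + (ε - lam) • (ψ : H)) = ψ)
    [(A.eigenspace (lam : ℂ)).HasOrthogonalProjection] (x : H) :
    Tendsto (fun ε => ε • R ε x) (𝓝[>] 0) (𝓝 ((A.eigenspace (lam : ℂ)).starProjection x)) := by
  set K := A.eigenspace (lam : ℂ)
  set P := K.starProjection
  have hclosure : x - P x ∈
      closure (LinearMap.range (A.toFun - (lam : ℂ) • A.domain.subtype) : Set H) := by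
    rw [← Submodule.topologicalClosure_coe, SetLike.mem_coe,
      ← Submodule.orthogonal_orthogonal_eq_closure]
    exact Submodule.orthogonal_le (orthogonal_range_sub_le_eigenspace hsym (hRmem 1 one_pos)
      (hRres 1 one_pos) (hRres' 1 one_pos)) (K.sub_starProjection_mem_orthogonal x)
  have hbound : ∀ᶠ ε in 𝓝[>] (0 : ℝ), ‖ε • R ε‖ ≤ 1 := by
    filter_upwards [self_mem_nhdsWithin] with ε (hε : 0 < ε)
    refine ContinuousLinearMap.opNorm_le_bound _ zero_le_one fun y => ?_
    simpa using norm_smul_resolvent_le hlb hε.le (hRmem ε hε) (hRres ε hε) y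
  have hperp : Tendsto (fun ε => ε • R ε (x - P x)) (𝓝[>] 0) (𝓝 0) := by
    refine tendsto_zero_of_mem_closure_of_norm_le (T := fun ε : ℝ => ε • R ε) hbound ?_ hclosure
    rintro _ ⟨ψ, rfl⟩
    simpa [Complex.coe_smul] using tendsto_smul_resolvent_apply_sub_smul hlb hRmem hRres hRres' ψ
  have hfix : ∀ᶠ ε in 𝓝[>] (0 : ℝ), ε • R ε (x - P x) + P x = ε • R ε x := by
    filter_upwards [self_mem_nhdsWithin] with ε (hε : 0 < ε)
    rw [map_sub, smul_sub, (smul_resolvent_eq_self_iff (hRmem ε hε) (hRres ε hε) (hRres' ε hε)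
      _).2 (K.starProjection_apply_mem x), sub_add_cancel]
  simpa using (hperp.add_const (P x)).congr' hfix

theorem eventually_norm_smul_resolvent_sub_starProjection_lt {B : H →ₗ.[ℂ] H}
    (hAB : A.domain ≤ B.domain) {c : ℝ} (hc : 0 ≤ c)
    (hrel : ∀ ψ : A.domain, ‖B ⟨(ψ : H), hAB ψ.2⟩‖ ≤ c * (‖A ψ‖ + ‖(ψ : H)‖))
    (hsym : A.IsFormalAdjoint A)
    (hlb : ∀ ψ : A.domain, lam * ‖(ψ : H)‖ ^ 2 ≤ (⟪(ψ : H), A ψ⟫_ℂ).re)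
    (hRmem : ∀ ε : ℝ, 0 < ε → ∀ x : H, R ε x ∈ A.domain)
    (hRres : ∀ (ε : ℝ) (hε : 0 < ε) (x : H),
      A ⟨R ε x, hRmem ε hε x⟩ + (ε - lam) • R ε x = x)
    (hRres' : ∀ ε : ℝ, 0 < ε → ∀ ψ : A.domain, R ε (A ψ + (ε - lam) • (ψ : H)) = ψ)
    [(A.eigenspace (lam : ℂ)).HasOrthogonalProjection] (x : H) {δ : ℝ} (hδ : 0 < δ) :
    ∀ᶠ ε in 𝓝[>] 0, ∀ hε : 0 < ε,
      ‖B ⟨ε • R ε x, hAB (A.domain.smul_of_tower_mem ε (hRmem ε hε x))⟩ -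
        B ⟨_, hAB (A.eigenspace_le_domain _ ((A.eigenspace (lam : ℂ)).starProjection_apply_mem x))⟩‖
        < δ := by
  set P := (A.eigenspace (lam : ℂ)).starProjection
  obtain ⟨hPA, hAP⟩ :=
    LinearPMap.mem_eigenspace_iff.1 ((A.eigenspace (lam : ℂ)).starProjection_apply_mem x)
  have hbound : Tendsto (fun ε => c * (ε * ‖x‖ + (|lam| + 1) * ‖ε • R ε x - P x‖))
      (𝓝[>] 0) (𝓝 0) := by
    have h := tendsto_smul_resolvent_starProjection hsym hlb hRmem hRres hRres' x
    simpa [P] using (((tendsto_nhdsWithin_of_tendsto_nhds tendsto_id).mul_const ‖x‖).add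
      ((h.sub_const (P x)).norm.const_mul (|lam| + 1))).const_mul c
  filter_upwards [(tendsto_order.1 hbound).2 δ hδ] with ε hεδ hε
  exact (norm_smul_resolvent_sub_le_of_relBound hAB hc hrel hlb hε.le (hRmem ε hε) (hRres ε hε)
    hPA (hAP.trans (Complex.coe_smul _ _)) x).trans_lt hεδ

end Family

end Resolvent

theorem statement_3_general {H : Type*} [NormedAddCommGroup H] [InnerProductSpace ℂ H]
    [CompleteSpace H] (lam : ℝ) (A B : H →ₗ.[ℂ] H)
    (hAsa : IsSelfAdjoint A)
    (hlb : ∀ ψ : A.domain, lam * ‖(ψ : H)‖ ^ 2 ≤ (⟪(ψ : H), A ψ⟫_ℂ).re)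
    (hAB : A.domain ≤ B.domain)
    (c : ℝ) (hc : 0 ≤ c)
    (hrel : ∀ ψ : A.domain, ‖B ⟨(ψ : H), hAB ψ.2⟩‖ ≤ c * (‖A ψ‖ + ‖(ψ : H)‖))
    (R : ℝ → H →L[ℂ] H)
    (hRmem : ∀ ε : ℝ, 0 < ε → ∀ x : H, R ε x ∈ A.domain)
    (hRres : ∀ (ε : ℝ) (hε : 0 < ε) (x : H),
      A ⟨R ε x, hRmem ε hε x⟩ + (ε - lam) • R ε x = x)
    (hRres' : ∀ (ε : ℝ) (hε : 0 < ε) (ψ : A.domain),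
      R ε (A ψ + (ε - lam) • (ψ : H)) = (ψ : H))
    (ν : ℕ) (ω : EuclideanSpace ℝ (Fin ν) → ℝ)
    (hωcont : Continuous ω) (hω0 : ω 0 = 0)
    (hωpos : ∀ k : EuclideanSpace ℝ (Fin ν), k ≠ 0 → 0 < ω k)
    (N : Set H)
    (hN : N = {x : H | ∃ h : x ∈ A.domain, A ⟨x, h⟩ = lam • x}) :
    (IsClosed N ∧ N ⊆ (B.domain : Set H)) ∧
    (∀ Ω : Set (EuclideanSpace ℝ (Fin ν)), Bornology.IsBounded Ω →
      ∃ CΩ : ℝ, 0 ≤ CΩ ∧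
        ∀ (x : H) (k : EuclideanSpace ℝ (Fin ν)), k ∈ Ω → ∀ hk0 : k ≠ 0,
          ‖B ⟨ω k • R (ω k) x,
              B.domain.smul_of_tower_mem (ω k)
                (hAB (hRmem (ω k) (hωpos k hk0) x))⟩‖ ≤ CΩ * ‖x‖) ∧
    (∃ (P : H →L[ℂ] H) (hPdom : ∀ x : H, P x ∈ B.domain),
      (∀ x : H, P x ∈ N) ∧ (∀ x ∈ N, P x = x) ∧
      (∀ x : H, ∀ y ∈ N, ⟪x - P x, y⟫_ℂ = 0) ∧
      (∀ x : H, ∀ δ : ℝ, 0 < δ → ∃ r : ℝ, 0 < r ∧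
        ∀ (k : EuclideanSpace ℝ (Fin ν)) (hk0 : k ≠ 0), ‖k‖ < r →
          ‖B ⟨ω k • R (ω k) x,
              B.domain.smul_of_tower_mem (ω k)
                (hAB (hRmem (ω k) (hωpos k hk0) x))⟩ - B ⟨P x, hPdom x⟩‖ < δ)) := by
  have hsym := hAsa.isFormalAdjoint_self
  set K := A.eigenspace (lam : ℂ)
  have hKN : (K : Set H) = N := by
    ext x
    simp [K, hN, LinearPMap.mem_eigenspace_iff, Complex.coe_smul]
  have hKclosed : IsClosed (K : Set H) :=
    isClosed_eigenspace (hRmem 1 one_pos) (hRres 1 one_pos) (hRres' 1 one_pos)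
  have : CompleteSpace K := hKclosed.completeSpace_coe
  refine ⟨⟨hKN ▸ hKclosed, hKN ▸ fun x hx => hAB (A.eigenspace_le_domain _ hx)⟩, ?_, ?_⟩
  · intro Ω hΩ
    obtain ⟨M, hM⟩ := (hΩ.isCompact_closure.image hωcont).bddAbove
    refine ⟨c * (|M| + |lam| + 1), by positivity, fun x k hk hk0 => ?_⟩
    have hωM : ω k ≤ |M| := (hM ⟨k, subset_closure hk, rfl⟩).trans (le_abs_self M)
    refine (norm_smul_resolvent_le_of_relBound hAB hc hrel hlb (hωpos k hk0).le
      (hRmem _ (hωpos k hk0)) (hRres _ (hωpos k hk0)) x).trans ?_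
    gcongr
  · refine ⟨K.starProjection,
      fun x => hAB (A.eigenspace_le_domain _ (K.starProjection_apply_mem x)),
      fun x => hKN.le (K.starProjection_apply_mem x),
      fun x hx => K.starProjection_eq_self_iff.2 (hKN.ge hx),
      fun x y hy => Submodule.inner_left_of_mem_orthogonal (hKN.ge hy)
        (K.sub_starProjection_mem_orthogonal x), fun x δ hδ => ?_⟩
    have hB := eventually_norm_smul_resolvent_sub_starProjection_lt hAB hc hrel hsym hlb hRmem
      hRres hRres' x hδ
    obtain ⟨r, hr, hball⟩ := Metric.eventually_nhds_iff.1 <| eventually_nhdsWithin_iff.1 <|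
      (tendsto_nhdsGT_zero_of_pos hωcont.continuousAt hω0 hωpos).eventually hB
    exact ⟨r, hr, fun k hk0 hkr => hball (by rwa [dist_zero_right]) hk0 (hωpos k hk0)⟩

/-- Let `A` be a densely defined selfadjoint operator in a complex Hilbert space `H` with
`A ≥ λ`, `B` an operator with `D(A) ⊆ D(B)` and `‖Bψ‖ ≤ c(‖Aψ‖ + ‖ψ‖)` on `D(A)`, and let
`R_ε = (A − λ + ε)^{-1}` for `ε > 0`. Let `ω : ℝ^ν → ℝ` be continuous with `ω(0) = 0` and
`ω > 0` off `0`. Then (a) the eigenspace `N = ker(A − λ)` is closed and `N ⊆ D(B)`;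
(b) `‖B(ω(k)R_{ω(k)}x)‖ ≤ C_Ω‖x‖` uniformly for `k` in any bounded set; and
(c) `B(ω(k)R_{ω(k)}x) → B(Px)` as `k → 0`, `k ≠ 0`, where `P` is the orthogonal
projection onto `N`. -/
theorem statement_3 {H : Type*} [NormedAddCommGroup H] [InnerProductSpace ℂ H]
    [CompleteSpace H] (lam : ℝ) (A B : H →ₗ.[ℂ] H)
    (hAdense : Dense (A.domain : Set H)) (hAsa : IsSelfAdjoint A)
    (hlb : ∀ ψ : A.domain, lam * ‖(ψ : H)‖ ^ 2 ≤ (⟪(ψ : H), A ψ⟫_ℂ).re)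
    (hAB : A.domain ≤ B.domain)
    (c : ℝ) (hc : 0 ≤ c)
    (hrel : ∀ ψ : A.domain, ‖B ⟨(ψ : H), hAB ψ.2⟩‖ ≤ c * (‖A ψ‖ + ‖(ψ : H)‖))
    (R : ℝ → H →L[ℂ] H)
    (hRmem : ∀ ε : ℝ, 0 < ε → ∀ x : H, R ε x ∈ A.domain)
    (hRres : ∀ (ε : ℝ) (hε : 0 < ε) (x : H),
      A ⟨R ε x, hRmem ε hε x⟩ + (ε - lam) • R ε x = x)
    (hRres' : ∀ (ε : ℝ) (hε : 0 < ε) (ψ : A.domain),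
      R ε (A ψ + (ε - lam) • (ψ : H)) = (ψ : H))
    (ν : ℕ) (hν : 1 ≤ ν) (ω : EuclideanSpace ℝ (Fin ν) → ℝ)
    (hωcont : Continuous ω) (hω0 : ω 0 = 0)
    (hωpos : ∀ k : EuclideanSpace ℝ (Fin ν), k ≠ 0 → 0 < ω k)
    (N : Set H)
    (hN : N = {x : H | ∃ h : x ∈ A.domain, A ⟨x, h⟩ = lam • x}) :
    (IsClosed N ∧ N ⊆ (B.domain : Set H)) ∧
    (∀ Ω : Set (EuclideanSpace ℝ (Fin ν)), Bornology.IsBounded Ω →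
      ∃ CΩ : ℝ, 0 ≤ CΩ ∧
        ∀ (x : H) (k : EuclideanSpace ℝ (Fin ν)), k ∈ Ω → ∀ hk0 : k ≠ 0,
          ‖B ⟨ω k • R (ω k) x,
              B.domain.smul_of_tower_mem (ω k)
                (hAB (hRmem (ω k) (hωpos k hk0) x))⟩‖ ≤ CΩ * ‖x‖) ∧
    (∃ (P : H →L[ℂ] H) (hPdom : ∀ x : H, P x ∈ B.domain),
      (∀ x : H, P x ∈ N) ∧ (∀ x ∈ N, P x = x) ∧
      (∀ x : H, ∀ y ∈ N, ⟪x - P x, y⟫_ℂ = 0) ∧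
      (∀ x : H, ∀ δ : ℝ, 0 < δ → ∃ r : ℝ, 0 < r ∧
        ∀ (k : EuclideanSpace ℝ (Fin ν)) (hk0 : k ≠ 0), ‖k‖ < r →
          ‖B ⟨ω k • R (ω k) x,
              B.domain.smul_of_tower_mem (ω k)
                (hAB (hRmem (ω k) (hωpos k hk0) x))⟩ - B ⟨P x, hPdom x⟩‖ < δ)) :=
  statement_3_general lam A B hAsa hlb hAB c hc hrel R hRmem hRres hRres' ν ω hωcont hω0 hωpos N hN
end

section
/- Fix ν ≥ 1. For every ε > 0 there exists a constant C ≥ 0 such that for all real a ≥ 0 and all ξ, b ∈ ℝ^ν: (1 + a + ‖ξ − b‖²)^{1/4} ≤ ε·(1 + a^{1/2} + ‖b‖^{2/3}) + C·(1 + ‖ξ‖^{1/2}). -/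
/-!
Split the left side by subadditivity of `t ↦ t ^ (1/4)` and `‖ξ - b‖ ≤ ‖ξ‖ + ‖b‖`, then trade the
low powers `a ^ (1/4)` and `‖b‖ ^ (1/2)` for `ε` times the higher powers `a ^ (1/2)` and
`‖b‖ ^ (2/3)` at the cost of a constant: `t ^ p ≤ ε t ^ q + C(ε)` whenever `0 ≤ p < q`.
-/

open Real

lemma Real.rpow_le_mul_rpow_add {ε t p q : ℝ} (hε : 0 < ε) (ht : 0 ≤ t) (hp : 0 ≤ p)
    (hpq : p < q) : t ^ p ≤ ε * t ^ q + ε⁻¹ ^ (p / (q - p)) := by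
  have hqp : q - p ≠ 0 := (sub_pos.2 hpq).ne'
  have hC : 0 ≤ ε⁻¹ ^ (p / (q - p)) := by positivity
  -- above the threshold `s` the power `t ^ q` dominates, below it `t ^ p` is bounded by `s ^ p`
  set s := ε⁻¹ ^ (q - p)⁻¹
  have hs : 0 < s := by positivity
  rcases le_or_gt t s with hts | hst
  · have hsp : s ^ p = ε⁻¹ ^ (p / (q - p)) := by
      rw [← rpow_mul (by positivity), inv_mul_eq_div]
    linarith [rpow_le_rpow ht hts hp, mul_nonneg hε.le (rpow_nonneg ht q)]
  · have hsε : s ^ (p - q) = ε := by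
      rw [← rpow_mul (by positivity), ← neg_sub q p, mul_neg, inv_mul_cancel₀ hqp, rpow_neg_one,
        inv_inv]
    have hle : t ^ (p - q) ≤ ε := hsε ▸ rpow_le_rpow_of_nonpos hs hst.le (by linarith)
    calc t ^ p = t ^ q * t ^ (p - q) := by rw [← rpow_add (hs.trans hst), add_sub_cancel]
      _ ≤ t ^ q * ε := by gcongr
      _ ≤ ε * t ^ q + ε⁻¹ ^ (p / (q - p)) := by linarith

lemma norm_sub_rpow_le {E : Type*} [SeminormedAddGroup E] (x y : E) {p : ℝ} (hp : 0 ≤ p)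
    (hp1 : p ≤ 1) : ‖x - y‖ ^ p ≤ ‖x‖ ^ p + ‖y‖ ^ p :=
  (rpow_le_rpow (norm_nonneg _) (norm_sub_le x y) hp).trans
    (rpow_add_le_add_rpow (norm_nonneg _) (norm_nonneg _) hp hp1)

lemma one_add_add_sq_rpow_le {a x : ℝ} (ha : 0 ≤ a) (hx : 0 ≤ x) :
    (1 + a + x ^ 2) ^ ((1 : ℝ) / 4) ≤ 1 + a ^ ((1 : ℝ) / 4) + x ^ ((1 : ℝ) / 2) := by
  have hsq : (x ^ 2) ^ ((1 : ℝ) / 4) = x ^ ((1 : ℝ) / 2) := by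
    rw [← rpow_natCast, ← rpow_mul hx]
    norm_num
  calc (1 + a + x ^ 2) ^ ((1 : ℝ) / 4)
      ≤ (1 + a) ^ ((1 : ℝ) / 4) + (x ^ 2) ^ ((1 : ℝ) / 4) :=
        rpow_add_le_add_rpow (by positivity) (by positivity) (by norm_num) (by norm_num)
    _ ≤ 1 ^ ((1 : ℝ) / 4) + a ^ ((1 : ℝ) / 4) + (x ^ 2) ^ ((1 : ℝ) / 4) := by
        gcongr
        exact rpow_add_le_add_rpow zero_le_one ha (by norm_num) (by norm_num)
    _ = 1 + a ^ ((1 : ℝ) / 4) + x ^ ((1 : ℝ) / 2) := by rw [one_rpow, hsq]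

theorem statement_6_general (ν : ℕ) (ε : ℝ) (hε : 0 < ε) :
    ∃ C : ℝ, 0 ≤ C ∧ ∀ a : ℝ, 0 ≤ a → ∀ ξ b : EuclideanSpace ℝ (Fin ν),
      (1 + a + ‖ξ - b‖ ^ 2) ^ ((1 : ℝ) / 4) ≤
        ε * (1 + a ^ ((1 : ℝ) / 2) + ‖b‖ ^ ((2 : ℝ) / 3)) +
          C * (1 + ‖ξ‖ ^ ((1 : ℝ) / 2)) := by
  obtain ⟨K₁, hK₁, hquarter⟩ : ∃ K ≥ 0, ∀ t : ℝ, 0 ≤ t →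
      t ^ ((1 : ℝ) / 4) ≤ ε * t ^ ((1 : ℝ) / 2) + K :=
    ⟨_, by positivity, fun t ht => rpow_le_mul_rpow_add hε ht (by norm_num) (by norm_num)⟩
  obtain ⟨K₂, hK₂, hhalf⟩ : ∃ K ≥ 0, ∀ t : ℝ, 0 ≤ t →
      t ^ ((1 : ℝ) / 2) ≤ ε * t ^ ((2 : ℝ) / 3) + K :=
    ⟨_, by positivity, fun t ht => rpow_le_mul_rpow_add hε ht (by norm_num) (by norm_num)⟩
  refine ⟨1 + K₁ + K₂, by positivity, fun a ha ξ b => ?_⟩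
  have hsplit := one_add_add_sq_rpow_le ha (norm_nonneg (ξ - b))
  have hξb := norm_sub_rpow_le ξ b (p := 1 / 2) (by norm_num) (by norm_num)
  linarith [hquarter a ha, hhalf ‖b‖ (norm_nonneg b),
    mul_nonneg (add_nonneg hK₁ hK₂) (rpow_nonneg (norm_nonneg ξ) ((1 : ℝ) / 2))]

/-- For fixed `ν ≥ 1` and every `ε > 0` there is `C ≥ 0` such that for all `a ≥ 0`
and all `ξ, b ∈ ℝ^ν`:
`(1 + a + ‖ξ − b‖²)^{1/4} ≤ ε(1 + a^{1/2} + ‖b‖^{2/3}) + C(1 + ‖ξ‖^{1/2})`. -/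
theorem statement_6 (ν : ℕ) (hν : 1 ≤ ν) (ε : ℝ) (hε : 0 < ε) :
    ∃ C : ℝ, 0 ≤ C ∧ ∀ a : ℝ, 0 ≤ a → ∀ ξ b : EuclideanSpace ℝ (Fin ν),
      (1 + a + ‖ξ - b‖ ^ 2) ^ ((1 : ℝ) / 4) ≤
        ε * (1 + a ^ ((1 : ℝ) / 2) + ‖b‖ ^ ((2 : ℝ) / 3)) +
          C * (1 + ‖ξ‖ ^ ((1 : ℝ) / 2)) :=
  statement_6_general ν ε hε
end

section
/- Let ν ≥ 1 and let ω, v : ℝ^ν → ℝ be measurable with ω ≥ 0. Let σ > 0 be such that m_σ := inf{ω(k) : ‖k‖ ≥ σ} > 0, and assume: ∫_{‖k‖>σ} v(k)²/(ω(k)^{1/2}(1+‖k‖²)) dk < ∞, ∫_{‖k‖>σ} v(k)²·ω(k)/(1+‖k‖²)² dk < ∞, and there is M > 0 with ω(k) ≤ M(1+‖k‖²) for all k ∈ ℝ^ν. For K ≥ σ define B_K : ℝ^ν → ℝ by B_K(k) = v(k)/(ω(k)+‖k‖²) if ‖k‖ ≥ K and B_K(k) = 0 otherwise. Then for every K ≥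 σ the following functions are square-integrable on ℝ^ν with respect to Lebesgue measure: (a) k ↦ ω(k)^{1/2}·B_K(k); (b) k ↦ ω(k)^{-1/2}·‖k‖·B_K(k); (c) k ↦ ‖k‖^s·B_K(k) for every s ∈ [0, 2/3]. -/
/-! On the support `‖k‖ ≥ K ≥ σ` of `B_K` one has `1 + ‖k‖² ≤ (1 + σ⁻²)(ω(k) + ‖k‖²)`, so each
squared function is dominated by a multiple of one of the two integrable majorants, using
`ω ≥ m_σ` for (b). For (c), `‖k‖^{2s} ≤ (1 + ‖k‖²)^{2/3}`, and `(1 + ‖k‖²)^{-4/3}` is the weighted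
geometric mean, with weights `2/3` and `1/3`, of `ω^{-1/2}(1 + ‖k‖²)⁻¹` and `ω(1 + ‖k‖²)⁻²`, hence
at most their sum. The sphere `‖k‖ = σ` is Lebesgue-null, so the support lies a.e. in `‖k‖ > σ`. -/

open MeasureTheory

section KernelBounds

variable {σ n w V : ℝ}

lemma one_add_sq_le_mul_add_sq (hσ : 0 < σ) (hn : σ ≤ n) (hw : 0 ≤ w) :
    1 + n ^ 2 ≤ (1 + σ⁻¹ ^ 2) * (w + n ^ 2) := by
  have hσn : 1 ≤ σ⁻¹ ^ 2 * n ^ 2 := by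
    rw [← mul_pow, one_le_sq_iff_one_le_abs,
      abs_of_pos (mul_pos (inv_pos.2 hσ) (hσ.trans_le hn))]
    exact (one_le_inv_mul₀ hσ).2 hn
  nlinarith [sq_nonneg σ⁻¹]

lemma inv_add_sq_le (hσ : 0 < σ) (hn : σ ≤ n) (hw : 0 ≤ w) :
    (w + n ^ 2)⁻¹ ≤ (1 + σ⁻¹ ^ 2) * (1 + n ^ 2)⁻¹ := by
  have hn0 : 0 < n := hσ.trans_le hn
  rw [← div_eq_mul_inv, le_div_iff₀ (by positivity), inv_mul_le_iff₀ (by positivity), mul_comm]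
  exact one_add_sq_le_mul_add_sq hσ hn hw

lemma sq_rpow_half_mul_div_add_sq_le (hσ : 0 < σ) (hn : σ ≤ n) (hw : 0 ≤ w) :
    (w ^ ((1 : ℝ) / 2) * (V / (w + n ^ 2))) ^ 2
      ≤ (1 + σ⁻¹ ^ 2) ^ 2 * (V ^ 2 * w / (1 + n ^ 2) ^ 2) := by
  have hinv := inv_add_sq_le hσ hn hw
  have hn0 : 0 < n := hσ.trans_le hn
  rw [← Real.sqrt_eq_rpow, mul_pow, Real.sq_sqrt hw]
  calc w * (V / (w + n ^ 2)) ^ 2 = V ^ 2 * w * ((w + n ^ 2)⁻¹) ^ 2 := by ring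
    _ ≤ V ^ 2 * w * ((1 + σ⁻¹ ^ 2) * (1 + n ^ 2)⁻¹) ^ 2 := by gcongr
    _ = _ := by field_simp

lemma sq_rpow_neg_half_mul_mul_div_add_sq_le {m : ℝ} (hσ : 0 < σ) (hn : σ ≤ n)
    (hm : 0 < m) (hmw : m ≤ w) :
    (w ^ (-(1 : ℝ) / 2) * n * (V / (w + n ^ 2))) ^ 2
      ≤ (1 + σ⁻¹ ^ 2) / m ^ ((1 : ℝ) / 2) * (V ^ 2 / (w ^ ((1 : ℝ) / 2) * (1 + n ^ 2))) := by
  have hw : 0 < w := hm.trans_le hmw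
  have hn0 : 0 < n := hσ.trans_le hn
  have hinv := inv_add_sq_le hσ hn hw.le
  have hneg : w ^ (-(1 : ℝ) / 2) = (√w)⁻¹ := by
    rw [neg_div, Real.rpow_neg hw.le, Real.sqrt_eq_rpow]
  rw [hneg, ← Real.sqrt_eq_rpow, ← Real.sqrt_eq_rpow]
  have hsq : n ^ 2 / (w + n ^ 2) ^ 2 ≤ (w + n ^ 2)⁻¹ := by
    rw [div_le_iff₀ (by positivity), sq (w + n ^ 2), ← mul_assoc, inv_mul_cancel₀ (by positivity)]
    linarith
  have hsqrt : (√w)⁻¹ ^ 2 ≤ (√m)⁻¹ * (√w)⁻¹ := by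
    rw [sq]; gcongr
  calc ((√w)⁻¹ * n * (V / (w + n ^ 2))) ^ 2
      = V ^ 2 * (√w)⁻¹ ^ 2 * (n ^ 2 / (w + n ^ 2) ^ 2) := by field_simp
    _ ≤ V ^ 2 * ((√m)⁻¹ * (√w)⁻¹) * ((1 + σ⁻¹ ^ 2) * (1 + n ^ 2)⁻¹) := by
      gcongr; exact hsq.trans hinv
    _ = _ := by field_simp

lemma rpow_le_one_add_sq_rpow_third {s : ℝ} (hn : 0 ≤ n) (hs0 : 0 ≤ s) (hs : s ≤ 2 / 3) :
    n ^ s ≤ (1 + n ^ 2) ^ ((1 : ℝ) / 3) := by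
  rcases le_total n 1 with hn1 | hn1
  · calc n ^ s ≤ 1 := Real.rpow_le_one hn hn1 hs0
      _ ≤ _ := Real.one_le_rpow (by nlinarith) (by norm_num)
  · calc n ^ s ≤ n ^ ((2 : ℝ) / 3) := Real.rpow_le_rpow_of_exponent_le hn1 hs
      _ = (n ^ 2) ^ ((1 : ℝ) / 3) := by
        rw [← Real.rpow_natCast, ← Real.rpow_mul hn]; norm_num
      _ ≤ _ := by gcongr; linarith

lemma inv_pow_four_le {u r : ℝ} (hu : 0 < u) (hr : 0 < r) :
    (u ^ 4)⁻¹ ≤ (r * u ^ 3)⁻¹ + r ^ 2 / u ^ 6 := by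
  -- `u ^ 3 + r ^ 3 - r * u ^ 2 = (u + r) * (u - r) ^ 2 + u * r ^ 2`
  have key : r * u ^ 2 ≤ u ^ 3 + r ^ 3 := by
    nlinarith [mul_nonneg (add_pos hu hr).le (sq_nonneg (u - r)), mul_pos hu (mul_pos hr hr)]
  rw [inv_eq_one_div, inv_eq_one_div, div_add_div _ _ (by positivity) (by positivity),
    div_le_div_iff₀ (by positivity) (by positivity)]
  have : 0 < u ^ 4 := by positivity
  nlinarith [mul_le_mul_of_nonneg_right key (by positivity : (0:ℝ) ≤ u ^ 7)]

lemma sq_rpow_mul_div_add_sq_le {s : ℝ} (hσ : 0 < σ) (hn : σ ≤ n) (hw : 0 < w)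
    (hs0 : 0 ≤ s) (hs : s ≤ 2 / 3) :
    (n ^ s * (V / (w + n ^ 2))) ^ 2
      ≤ (1 + σ⁻¹ ^ 2) ^ 2 *
        (V ^ 2 / (w ^ ((1 : ℝ) / 2) * (1 + n ^ 2)) + V ^ 2 * w / (1 + n ^ 2) ^ 2) := by
  have hn0 : 0 < n := hσ.trans_le hn
  have hinv := inv_add_sq_le hσ hn hw.le
  set u := (1 + n ^ 2) ^ ((1 : ℝ) / 3) with hu
  have hu0 : 0 < u := by positivity
  have hu3 : u ^ 3 = 1 + n ^ 2 := by
    rw [hu, ← Real.rpow_natCast, ← Real.rpow_mul (by positivity)]; norm_num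
  have hns : n ^ s ≤ u := rpow_le_one_add_sq_rpow_third hn0.le hs0 hs
  have hr0 : 0 < √w := Real.sqrt_pos.2 hw
  rw [← Real.sqrt_eq_rpow, ← hu3]
  rw [← hu3] at hinv
  calc (n ^ s * (V / (w + n ^ 2))) ^ 2 = V ^ 2 * (n ^ s) ^ 2 * ((w + n ^ 2)⁻¹) ^ 2 := by ring
    _ ≤ V ^ 2 * u ^ 2 * ((1 + σ⁻¹ ^ 2) * (u ^ 3)⁻¹) ^ 2 := by gcongr
    _ = (1 + σ⁻¹ ^ 2) ^ 2 * (V ^ 2 * (u ^ 4)⁻¹) := by field_simp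
    _ ≤ (1 + σ⁻¹ ^ 2) ^ 2 * (V ^ 2 * ((√w * u ^ 3)⁻¹ + √w ^ 2 / (u ^ 3) ^ 2)) := by
        gcongr
        exact inv_pow_four_le hu0 hr0 |>.trans_eq (by ring)
    _ = _ := by rw [Real.sq_sqrt hw.le]; field_simp

end KernelBounds

lemma setOf_le_norm_ae_le_setOf_lt_norm {E : Type*} [NormedAddCommGroup E] [NormedSpace ℝ E]
    [MeasurableSpace E] [BorelSpace E] [FiniteDimensional ℝ E] (μ : Measure E)
    [μ.IsAddHaarMeasure] {σ K : ℝ} (hσ : σ ≠ 0) (hK : σ ≤ K) :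
    {k : E | K ≤ ‖k‖} ≤ᵐ[μ] {k | σ < ‖k‖} := by
  refine ae_le_set.2 (measure_mono_null (fun k hk => ?_) (μ.addHaar_sphere_of_ne_zero 0 hσ))
  simp only [Set.mem_sdiff, Set.mem_ofPred_eq, not_lt] at hk
  simpa using le_antisymm hk.2 (hK.trans hk.1)

lemma integrable_indicator_of_norm_le {α E : Type*} [MeasurableSpace α] [NormedAddCommGroup E]
    {μ : Measure α} {S T : Set α} {f : α → ℝ} {g : α → E} (hT : MeasurableSet T)
    (hTS : T ≤ᵐ[μ] S) (hf : IntegrableOn f S μ) (hg : AEStronglyMeasurable g μ)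
    (hle : ∀ k ∈ T, ‖g k‖ ≤ f k) : Integrable (T.indicator g) μ :=
  (integrable_indicator_iff hT).2 <|
    (hf.mono_set_ae hTS).mono' hg.restrict (ae_restrict_of_forall_mem hT hle)

theorem statement_7_general (ν : ℕ)
    (ω v : EuclideanSpace ℝ (Fin ν) → ℝ) (hωm : Measurable ω) (hvm : Measurable v)
    (σ : ℝ) (hσ : 0 < σ)
    (mσ : ℝ) (hmσ : 0 < mσ) (hinf : ∀ k, σ ≤ ‖k‖ → mσ ≤ ω k)
    (hint1 : IntegrableOn
      (fun k => v k ^ 2 / (ω k ^ ((1 : ℝ) / 2) * (1 + ‖k‖ ^ 2))) {k | σ < ‖k‖} volume)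
    (hint2 : IntegrableOn
      (fun k => v k ^ 2 * ω k / (1 + ‖k‖ ^ 2) ^ 2) {k | σ < ‖k‖} volume)
    (K : ℝ) (hK : σ ≤ K)
    (B : EuclideanSpace ℝ (Fin ν) → ℝ)
    (hB : B = fun k => if K ≤ ‖k‖ then v k / (ω k + ‖k‖ ^ 2) else 0) :
    Integrable (fun k => (ω k ^ ((1 : ℝ) / 2) * B k) ^ 2) volume ∧
    Integrable (fun k => (ω k ^ (-(1 : ℝ) / 2) * ‖k‖ * B k) ^ 2) volume ∧
    ∀ s : ℝ, 0 ≤ s → s ≤ 2 / 3 → Integrable (fun k => (‖k‖ ^ s * B k) ^ 2) volume := by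
  set T := {k : EuclideanSpace ℝ (Fin ν) | K ≤ ‖k‖}
  have hT : MeasurableSet T := measurableSet_le measurable_const measurable_norm
  have hTS := setOf_le_norm_ae_le_setOf_lt_norm
    (volume : Measure (EuclideanSpace ℝ (Fin ν))) hσ.ne' hK
  have hB_indicator : ∀ h : EuclideanSpace ℝ (Fin ν) → ℝ, (fun k => (h k * B k) ^ 2)
      = T.indicator fun k => (h k * (v k / (ω k + ‖k‖ ^ 2))) ^ 2 := by
    intro h; ext k
    by_cases hk : K ≤ ‖k‖ <;> simp [hB, T, hk]
  have bound : ∀ (h f : EuclideanSpace ℝ (Fin ν) → ℝ), Measurable h →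
      IntegrableOn f {k | σ < ‖k‖} →
      (∀ k, K ≤ ‖k‖ → (h k * (v k / (ω k + ‖k‖ ^ 2))) ^ 2 ≤ f k) →
      Integrable (fun k => (h k * B k) ^ 2) := by
    intro h f hh hf hle
    rw [hB_indicator]
    refine integrable_indicator_of_norm_le hT hTS hf (by fun_prop) fun k hk => ?_
    rw [Real.norm_of_nonneg (sq_nonneg _)]
    exact hle k hk
  refine ⟨bound _ _ (by fun_prop) (hint2.const_mul _) fun k hk =>
      sq_rpow_half_mul_div_add_sq_le hσ (hK.trans hk) (hmσ.le.trans (hinf k (hK.trans hk))),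
    bound _ _ (by fun_prop) (hint1.const_mul _) fun k hk =>
      sq_rpow_neg_half_mul_mul_div_add_sq_le hσ (hK.trans hk) hmσ (hinf k (hK.trans hk)),
    fun s hs0 hs => bound _ _ (by fun_prop) ((hint1.add hint2).const_mul _) fun k hk =>
      sq_rpow_mul_div_add_sq_le hσ (hK.trans hk) (hmσ.trans_le (hinf k (hK.trans hk))) hs0 hs⟩

/-- Regularity of the Gross-transformation kernel `B_K(k) = 1_{‖k‖≥K} v(k)/(ω(k)+‖k‖²)`.
Under Hypothesis 2(1), 2(3) of the paper, for every `K ≥ σ` the functions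
`ω^{1/2}B_K`, `ω^{-1/2}|k|B_K` and `|k|^s B_K` (`0 ≤ s ≤ 2/3`) are square-integrable. -/
theorem statement_7 (ν : ℕ) (hν : 1 ≤ ν)
    (ω v : EuclideanSpace ℝ (Fin ν) → ℝ) (hωm : Measurable ω) (hvm : Measurable v)
    (hω0 : ∀ k, 0 ≤ ω k) (σ : ℝ) (hσ : 0 < σ)
    (mσ : ℝ) (hmσ : 0 < mσ) (hinf : ∀ k, σ ≤ ‖k‖ → mσ ≤ ω k)
    (hint1 : IntegrableOn
      (fun k => v k ^ 2 / (ω k ^ ((1 : ℝ) / 2) * (1 + ‖k‖ ^ 2))) {k | σ < ‖k‖} volume)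
    (hint2 : IntegrableOn
      (fun k => v k ^ 2 * ω k / (1 + ‖k‖ ^ 2) ^ 2) {k | σ < ‖k‖} volume)
    (M : ℝ) (hM : 0 < M) (hMb : ∀ k, ω k ≤ M * (1 + ‖k‖ ^ 2))
    (K : ℝ) (hK : σ ≤ K)
    (B : EuclideanSpace ℝ (Fin ν) → ℝ)
    (hB : B = fun k => if K ≤ ‖k‖ then v k / (ω k + ‖k‖ ^ 2) else 0) :
    Integrable (fun k => (ω k ^ ((1 : ℝ) / 2) * B k) ^ 2) volume ∧
    Integrable (fun k => (ω k ^ (-(1 : ℝ) / 2) * ‖k‖ * B k) ^ 2) volume ∧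
    ∀ s : ℝ, 0 ≤ s → s ≤ 2 / 3 → Integrable (fun k => (‖k‖ ^ s * B k) ^ 2) volume :=
  statement_7_general ν ω v hωm hvm σ hσ mσ hmσ hinf hint1 hint2 K hK B hB
end

section
/- Let μ ≥ 0 and g ∈ ℝ with g ≠ 0, and define on ℝ³ the dispersion ω(k) = (μ² + ‖k‖²)^{1/2} and coupling function v(k) = g·ω(k)^{-1/2}. Then for every η ∈ ℝ³ with η ≠ 0 and every K > 0, the function k ↦ ⟨η, k⟩·v(k)/(ω(k)+‖k‖²) is not square-integrable on {k ∈ ℝ³ : ‖k‖ ≥ K}; equivalently, ∫_{‖k‖ ≥ K} ⟨η, k⟩²·g² / ((μ²+‖k‖²)^{1/2}·((μ²+‖k‖²)^{1/2}+‖k‖²)²) dk = ∞. -/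
/-!
For `‖k‖ ≥ 1` the integrand is bounded below by a multiple of `⟪η, k⟫² / ‖k‖⁵`, which is
homogeneous of degree `-3`, i.e. minus the dimension. For such a function `f` the integral
`I(R) = ∫_{‖k‖ ≥ R} f` is invariant under `R ↦ 2R`, so `I(R)` is the integral of `f` over the
shell `R ≤ ‖k‖ < 2R` plus `I(R)` itself. The shell integral is positive, hence `I(R) = ∞`.
-/

open MeasureTheory Module
open scoped ENNReal InnerProductSpace

section Homogeneous

variable {E : Type*} [NormedAddCommGroup E] [NormedSpace ℝ E] [FiniteDimensional ℝ E]
  [MeasurableSpace E] [BorelSpace E] (μ : Measure E) [μ.IsAddHaarMeasure]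

theorem lintegral_comp_smul (f : E → ℝ≥0∞) {r : ℝ} (hr : r ≠ 0) :
    ∫⁻ x, f (r • x) ∂μ = ENNReal.ofReal |(r ^ finrank ℝ E)⁻¹| * ∫⁻ x, f x ∂μ := by
  rw [← smul_eq_mul, ← lintegral_smul_measure, ← Measure.map_addHaar_smul μ hr]
  exact (lintegral_map_equiv f
    (Homeomorph.smul (isUnit_iff_ne_zero.2 hr).unit).toMeasurableEquiv).symm

theorem setLIntegral_norm_ge_mul_eq_of_homogeneous {f : E → ℝ≥0∞} {t : ℝ} (ht : 0 < t)
    (hf : ∀ x, f (t • x) = ENNReal.ofReal (t ^ finrank ℝ E)⁻¹ * f x) (R : ℝ) :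
    ∫⁻ x in {x | t * R ≤ ‖x‖}, f x ∂μ = ∫⁻ x in {x | R ≤ ‖x‖}, f x ∂μ := by
  have hc₀ : ENNReal.ofReal (t ^ finrank ℝ E)⁻¹ ≠ 0 := by simp [ht]
  have hmeas (a : ℝ) : MeasurableSet {x : E | a ≤ ‖x‖} :=
    measurableSet_le measurable_const measurable_norm
  have hscale := lintegral_comp_smul μ ({x | t * R ≤ ‖x‖}.indicator f) ht.ne'
  rw [lintegral_indicator (hmeas _), abs_of_pos (by positivity)] at hscale
  refine (ENNReal.mul_right_inj hc₀ ENNReal.ofReal_ne_top).1 ?_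
  rw [← hscale, ← lintegral_const_mul' _ _ ENNReal.ofReal_ne_top, ← lintegral_indicator (hmeas _)]
  congr 1
  ext x
  simp only [Set.indicator, Set.mem_ofPred_eq, norm_smul, Real.norm_eq_abs, abs_of_pos ht,
    mul_le_mul_iff_of_pos_left ht, hf]

theorem setLIntegral_norm_ge_eq_top_of_homogeneous {f : E → ℝ≥0∞}
    (hf : ∀ x, f ((2 : ℝ) • x) = ENNReal.ofReal (2 ^ finrank ℝ E)⁻¹ * f x)
    {R : ℝ} (hR : 0 ≤ R)
    (hshell : ∫⁻ x in {x | R ≤ ‖x‖ ∧ ‖x‖ < 2 * R}, f x ∂μ ≠ 0) :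
    ∫⁻ x in {x | R ≤ ‖x‖}, f x ∂μ = ⊤ := by
  by_contra hfin
  have hsplit := lintegral_inter_add_sdiff (μ := μ) f {x | R ≤ ‖x‖}
    (measurableSet_lt measurable_norm measurable_const : MeasurableSet {x : E | ‖x‖ < 2 * R})
  have houter : {x : E | R ≤ ‖x‖} \ {x | ‖x‖ < 2 * R} = {x | 2 * R ≤ ‖x‖} := by
    ext x
    simp only [Set.mem_sdiff, Set.mem_ofPred_eq, not_lt]
    constructor
    · exact fun h => h.2
    · exact fun h => ⟨by linarith, h⟩
  rw [houter, setLIntegral_norm_ge_mul_eq_of_homogeneous μ two_pos hf] at hsplit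
  exact hshell ((ENNReal.add_left_inj hfin).1 (by rwa [zero_add]))

end Homogeneous

section InnerSq

variable {E : Type*} [NormedAddCommGroup E] [InnerProductSpace ℝ E]

theorem inner_sq_div_norm_pow_smul (η k : E) {t : ℝ} (ht : 0 < t) :
    ENNReal.ofReal (⟪η, t • k⟫_ℝ ^ 2 / ‖t • k‖ ^ (finrank ℝ E + 2)) =
      ENNReal.ofReal (t ^ finrank ℝ E)⁻¹ *
        ENNReal.ofReal (⟪η, k⟫_ℝ ^ 2 / ‖k‖ ^ (finrank ℝ E + 2)) := by
  rw [← ENNReal.ofReal_mul (by positivity), inner_smul_right, norm_smul,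
    Real.norm_of_nonneg ht.le, mul_pow, mul_pow, mul_div_mul_comm, pow_add t]
  congr 1
  field_simp

variable [FiniteDimensional ℝ E] [MeasurableSpace E] [BorelSpace E] (μ : Measure E)
  [μ.IsAddHaarMeasure]

theorem setLIntegral_inner_sq_div_norm_pow_eq_top {η : E} (hη : η ≠ 0) {R : ℝ} (hR : 0 < R) :
    ∫⁻ k in {k | R ≤ ‖k‖}, ENNReal.ofReal (⟪η, k⟫_ℝ ^ 2 / ‖k‖ ^ (finrank ℝ E + 2)) ∂μ = ⊤ := by
  refine setLIntegral_norm_ge_eq_top_of_homogeneous μ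
    (fun k => inner_sq_div_norm_pow_smul η k two_pos) hR.le ?_
  set U : Set E := {k | ⟪η, k⟫_ℝ ≠ 0} ∩ {k | R < ‖k‖ ∧ ‖k‖ < 2 * R}
  have hU_open : IsOpen U :=
    (isOpen_ne_fun (continuous_const.inner continuous_id) continuous_const).inter
      ((isOpen_lt continuous_const continuous_norm).inter
        (isOpen_lt continuous_norm continuous_const))
  have hU_ne : U.Nonempty := by
    have hη' : 0 < ‖η‖ := norm_pos_iff.2 hη
    refine ⟨(3 * R / (2 * ‖η‖)) • η, ?_, ?_, ?_⟩ <;>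
      simp only [Set.mem_ofPred_eq, real_inner_smul_right, real_inner_self_eq_norm_sq, norm_smul,
        Real.norm_of_nonneg (by positivity : 0 ≤ 3 * R / (2 * ‖η‖))]
    · positivity
    · field_simp; linarith
    · field_simp; linarith
  have hU_sub : U ⊆ Function.support
      (fun k => ENNReal.ofReal (⟪η, k⟫_ℝ ^ 2 / ‖k‖ ^ (finrank ℝ E + 2))) ∩
        {k | R ≤ ‖k‖ ∧ ‖k‖ < 2 * R} := by
    rintro k ⟨hk, hRk, hk2R⟩
    have hk_pos : 0 < ‖k‖ := hR.trans hRk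
    exact ⟨(ENNReal.ofReal_pos.2 (div_pos (sq_pos_of_ne_zero hk) (pow_pos hk_pos _))).ne',
      hRk.le, hk2R⟩
  refine ((setLIntegral_pos_iff (by fun_prop)).2 ?_).ne'
  exact (hU_open.measure_pos μ hU_ne).trans_le (measure_mono hU_sub)

end InnerSq

theorem sqrt_mul_sqrt_add_sq_sq_le (μ : ℝ) {r : ℝ} (hr : 1 ≤ r) :
    √(μ ^ 2 + r ^ 2) * (√(μ ^ 2 + r ^ 2) + r ^ 2) ^ 2 ≤ (|μ| + 1) * (|μ| + 2) ^ 2 * r ^ 5 := by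
  have hω : √(μ ^ 2 + r ^ 2) ≤ (|μ| + 1) * r := by
    rw [Real.sqrt_le_iff]
    refine ⟨by positivity, ?_⟩
    nlinarith [sq_abs μ, abs_nonneg μ, mul_le_mul_of_nonneg_left hr (abs_nonneg μ)]
  have hω' : √(μ ^ 2 + r ^ 2) + r ^ 2 ≤ (|μ| + 2) * r ^ 2 := by
    nlinarith [mul_le_mul_of_nonneg_left hr (by positivity : 0 ≤ (|μ| + 1) * r)]
  calc √(μ ^ 2 + r ^ 2) * (√(μ ^ 2 + r ^ 2) + r ^ 2) ^ 2
      ≤ ((|μ| + 1) * r) * ((|μ| + 2) * r ^ 2) ^ 2 := by gcongr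
    _ = (|μ| + 1) * (|μ| + 2) ^ 2 * r ^ 5 := by ring

theorem mul_div_pow_le_div_sqrt_mul_sqrt_add_sq_sq (μ g a : ℝ) {r : ℝ} (hr : 1 ≤ r) :
    g ^ 2 / ((|μ| + 1) * (|μ| + 2) ^ 2) * (a ^ 2 / r ^ 5) ≤
      a ^ 2 * g ^ 2 / (√(μ ^ 2 + r ^ 2) * (√(μ ^ 2 + r ^ 2) + r ^ 2) ^ 2) :=
  calc g ^ 2 / ((|μ| + 1) * (|μ| + 2) ^ 2) * (a ^ 2 / r ^ 5)
      = a ^ 2 * g ^ 2 / ((|μ| + 1) * (|μ| + 2) ^ 2 * r ^ 5) := by field_simp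
    _ ≤ _ := div_le_div_of_nonneg_left (by positivity) (by positivity)
        (sqrt_mul_sqrt_add_sq_sq_le μ hr)

theorem statement_8_general (μ g : ℝ) (hg : g ≠ 0)
    (η : EuclideanSpace ℝ (Fin 3)) (hη : η ≠ 0) (K : ℝ) :
    ∫⁻ k in {k : EuclideanSpace ℝ (Fin 3) | K ≤ ‖k‖},
      ENNReal.ofReal (⟪η, k⟫_ℝ ^ 2 * g ^ 2 /
        (Real.sqrt (μ ^ 2 + ‖k‖ ^ 2) *
          (Real.sqrt (μ ^ 2 + ‖k‖ ^ 2) + ‖k‖ ^ 2) ^ 2)) = ⊤ := by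
  set R := max K 1
  set c : ℝ := g ^ 2 / ((|μ| + 1) * (|μ| + 2) ^ 2)
  have hc : ENNReal.ofReal c ≠ 0 := (ENNReal.ofReal_pos.2 (by positivity)).ne'
  have hdiv := setLIntegral_inner_sq_div_norm_pow_eq_top volume hη (R := R) (by positivity)
  simp only [finrank_euclideanSpace_fin, Nat.reduceAdd] at hdiv
  refine eq_top_iff.2 ?_
  calc ⊤ = ENNReal.ofReal c * ∫⁻ k in {k | R ≤ ‖k‖}, ENNReal.ofReal (⟪η, k⟫_ℝ ^ 2 / ‖k‖ ^ 5) := by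
        rw [hdiv, ENNReal.mul_top hc]
    _ = ∫⁻ k in {k | R ≤ ‖k‖}, ENNReal.ofReal (c * (⟪η, k⟫_ℝ ^ 2 / ‖k‖ ^ 5)) := by
        rw [← lintegral_const_mul' _ _ ENNReal.ofReal_ne_top]
        simp only [ENNReal.ofReal_mul (by positivity : 0 ≤ c)]
    _ ≤ _ := setLIntegral_mono' (measurableSet_le measurable_const measurable_norm)
        fun k hk => ENNReal.ofReal_le_ofReal <|
          mul_div_pow_le_div_sqrt_mul_sqrt_add_sq_sq μ g _ ((le_max_right K 1).trans hk)
    _ ≤ _ := lintegral_mono_set fun k hk => (le_max_left K 1).trans hk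

/-- In the physical Nelson model on `ℝ³` (`ω(k) = √(μ²+‖k‖²)`, `v = g·ω^{-1/2}`, `g ≠ 0`),
for every `η ≠ 0` and `K > 0` the function `k ↦ ⟨η,k⟩·v(k)/(ω(k)+‖k‖²)` is not
square-integrable on `{‖k‖ ≥ K}`:
`∫_{‖k‖≥K} ⟨η,k⟩²g²/(√(μ²+‖k‖²)·(√(μ²+‖k‖²)+‖k‖²)²) dk = ∞`. -/
theorem statement_8 (μ g : ℝ) (hμ : 0 ≤ μ) (hg : g ≠ 0)
    (η : EuclideanSpace ℝ (Fin 3)) (hη : η ≠ 0) (K : ℝ) (hK : 0 < K) :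
    ∫⁻ k in {k : EuclideanSpace ℝ (Fin 3) | K ≤ ‖k‖},
      ENNReal.ofReal (⟪η, k⟫_ℝ ^ 2 * g ^ 2 /
        (Real.sqrt (μ ^ 2 + ‖k‖ ^ 2) *
          (Real.sqrt (μ ^ 2 + ‖k‖ ^ 2) + ‖k‖ ^ 2) ^ 2)) = ⊤ :=
  statement_8_general μ g hg η hη K
end

section
/- Let ν ≥ 1 and let S ⊆ ℝ^ν be open, nonempty, and a cone (t·k ∈ S whenever t > 0 and k ∈ S). Let ρ : [0,∞) → [0,∞] be measurable, set f(k) = ρ(‖k‖), and let R > 0. If ∫_{B_R(0)} f(k) dk = ∞, then ∫_{S ∩ B_R(0)} f(k) dk = ∞. -/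
/-!
Linear isometries preserve Lebesgue measure and radial functions, and they act transitively on
each sphere about the origin, so the preimages of the open cone `S` under linear isometries cover
`ℝ^ν \ {0}`. By compactness of a sphere, and since `S` is a cone, finitely many of them, say `n`,
already cover it, whence `∫_{B_R} f ≤ n ∫_{S ∩ B_R} f`. When `0 ∈ S` the open cone `S` is the
whole space.
-/

open MeasureTheory Metric Set Filter Topology
open scoped ENNReal

section Cone

variable {V : Type*} [NormedAddCommGroup V] [NormedSpace ℝ V]

theorem eq_univ_of_isOpen_of_zero_mem {S : Set V} (hopen : IsOpen S)
    (hcone : ∀ t : ℝ, 0 < t → ∀ k ∈ S, t • k ∈ S) (h0 : (0 : V) ∈ S) : S = univ := by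
  refine eq_univ_of_forall fun k ↦ ?_
  have hsmall : ∀ᶠ t : ℝ in 𝓝[>] 0, t • k ∈ S := by
    have : Tendsto (fun t : ℝ ↦ t • k) (𝓝 0) (𝓝 0) := by
      simpa using (tendsto_id (x := 𝓝 (0 : ℝ))).smul_const k
    exact (this.mono_left nhdsWithin_le_nhds) (hopen.mem_nhds h0)
  obtain ⟨t, hkt, ht⟩ := (hsmall.and self_mem_nhdsWithin).exists
  simpa [smul_smul, inv_mul_cancel₀ (ne_of_gt ht)] using hcone t⁻¹ (inv_pos.2 ht) _ hkt

end Cone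

section InnerProductSpace

variable {E : Type*} [NormedAddCommGroup E] [InnerProductSpace ℝ E]

theorem exists_linearIsometryEquiv_apply_eq {x y : E} (h : ‖x‖ = ‖y‖) :
    ∃ T : E ≃ₗᵢ[ℝ] E, T x = y :=
  ⟨Submodule.reflection (ℝ ∙ (x - y))ᗮ, Submodule.reflection_sub h⟩

theorem exists_finset_linearIsometryEquiv_preimage_cover [FiniteDimensional ℝ E] {S : Set E}
    (hopen : IsOpen S) (hcone : ∀ t : ℝ, 0 < t → ∀ k ∈ S, t • k ∈ S) {u : E} (huS : u ∈ S)
    (hu : u ≠ 0) : ∃ Ts : Finset (E ≃ₗᵢ[ℝ] E), {0}ᶜ ⊆ ⋃ T ∈ Ts, T ⁻¹' S := by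
  have hsphere : sphere (0 : E) ‖u‖ ⊆ ⋃ T : E ≃ₗᵢ[ℝ] E, T ⁻¹' S := fun x hx ↦ by
    obtain ⟨T, hT⟩ := exists_linearIsometryEquiv_apply_eq (mem_sphere_zero_iff_norm.1 hx)
    exact mem_iUnion.2 ⟨T, by simpa [hT] using huS⟩
  obtain ⟨Ts, hTs⟩ := (isCompact_sphere (0 : E) ‖u‖).elim_finite_subcover _
    (fun T ↦ hopen.preimage T.continuous) hsphere
  refine ⟨Ts, fun k hk ↦ ?_⟩
  have hk : 0 < ‖k‖ := norm_pos_iff.2 hk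
  set c := ‖u‖ / ‖k‖
  have hc : 0 < c := div_pos (norm_pos_iff.2 hu) hk
  have hck : c • k ∈ sphere (0 : E) ‖u‖ := by
    rw [mem_sphere_zero_iff_norm, norm_smul, Real.norm_of_nonneg hc.le, div_mul_cancel₀ _ hk.ne']
  obtain ⟨T, hT, hTS⟩ := mem_iUnion₂.1 (hTs hck)
  refine mem_iUnion₂.2 ⟨T, hT, ?_⟩
  simpa [smul_smul, inv_mul_cancel₀ hc.ne'] using hcone c⁻¹ (inv_pos.2 hc) _ hTS

variable [FiniteDimensional ℝ E] [MeasurableSpace E] [BorelSpace E]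

theorem setLIntegral_preimage_linearIsometryEquiv {f : E → ℝ≥0∞}
    (hf : ∀ (T : E ≃ₗᵢ[ℝ] E) x, f (T x) = f x) (T : E ≃ₗᵢ[ℝ] E) (A : Set E) :
    ∫⁻ x in T ⁻¹' A, f x = ∫⁻ x in A, f x := by
  simpa only [hf] using
    T.measurePreserving.setLIntegral_comp_preimage_emb T.toHomeomorph.measurableEmbedding f A

theorem exists_lintegral_le_mul_setLIntegral_of_isOpen_cone {S : Set E} (hopen : IsOpen S)
    (hcone : ∀ t : ℝ, 0 < t → ∀ k ∈ S, t • k ∈ S) {u : E} (huS : u ∈ S) (hu : u ≠ 0) :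
    ∃ n : ℕ, ∀ f : E → ℝ≥0∞, (∀ (T : E ≃ₗᵢ[ℝ] E) x, f (T x) = f x) →
      ∫⁻ x, f x ≤ n * ∫⁻ x in S, f x := by
  have : Nontrivial E := ⟨⟨u, 0, hu⟩⟩
  obtain ⟨Ts, hTs⟩ := exists_finset_linearIsometryEquiv_preimage_cover hopen hcone huS hu
  refine ⟨Ts.card, fun f hf ↦ ?_⟩
  calc ∫⁻ x, f x = ∫⁻ x in {0}ᶜ, f x := by rw [restrict_compl_singleton]
    _ ≤ ∫⁻ x in ⋃ T ∈ Ts, T ⁻¹' S, f x := lintegral_mono_set hTs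
    _ ≤ ∑ T ∈ Ts, ∫⁻ x in T ⁻¹' S, f x := by
      rw [← Finset.tsum_subtype]
      simpa only [iUnion_subtype] using lintegral_iUnion_le (fun T : Ts ↦ (T : E ≃ₗᵢ[ℝ] E) ⁻¹' S) f
    _ = Ts.card * ∫⁻ x in S, f x := by
      simp [setLIntegral_preimage_linearIsometryEquiv hf]

end InnerProductSpace

theorem statement_12_general (ν : ℕ) (S : Set (EuclideanSpace ℝ (Fin ν)))
    (hopen : IsOpen S) (hne : S.Nonempty)
    (hcone : ∀ t : ℝ, 0 < t → ∀ k ∈ S, t • k ∈ S)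
    (ρ : ℝ → ℝ≥0∞) (R : ℝ)
    (hdiv : ∫⁻ k in Metric.ball (0 : EuclideanSpace ℝ (Fin ν)) R, ρ ‖k‖ = ⊤) :
    ∫⁻ k in S ∩ Metric.ball (0 : EuclideanSpace ℝ (Fin ν)) R, ρ ‖k‖ = ⊤ := by
  by_cases h0 : 0 ∈ S
  · rwa [eq_univ_of_isOpen_of_zero_mem hopen hcone h0, univ_inter]
  obtain ⟨u, huS⟩ := hne
  obtain ⟨n, hn⟩ := exists_lintegral_le_mul_setLIntegral_of_isOpen_cone hopen hcone huS
    (ne_of_mem_of_not_mem huS h0)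
  have hinv : ∀ (T : EuclideanSpace ℝ (Fin ν) ≃ₗᵢ[ℝ] EuclideanSpace ℝ (Fin ν)) x,
      (ball 0 R).indicator (fun k ↦ ρ ‖k‖) (T x) = (ball 0 R).indicator (fun k ↦ ρ ‖k‖) x := by
    intro T x
    simp only [indicator, mem_ball_zero_iff, T.norm_map]
  have hbound := hn _ hinv
  rw [lintegral_indicator measurableSet_ball, hdiv, setLIntegral_indicator measurableSet_ball,
    top_le_iff, ENNReal.mul_eq_top] at hbound
  obtain ⟨-, hS⟩ | ⟨hn_top, -⟩ := hbound
  · rwa [inter_comm]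
  · exact absurd hn_top (ENNReal.natCast_ne_top n)

/-- If `S ⊆ ℝ^ν` is an open nonempty cone and `f(k) = ρ(‖k‖)` is a radial `[0,∞]`-valued
function whose integral over the ball `B_R(0)` is infinite, then its integral over
`S ∩ B_R(0)` is infinite as well. -/
theorem statement_12 (ν : ℕ) (hν : 1 ≤ ν) (S : Set (EuclideanSpace ℝ (Fin ν)))
    (hopen : IsOpen S) (hne : S.Nonempty)
    (hcone : ∀ t : ℝ, 0 < t → ∀ k ∈ S, t • k ∈ S)
    (ρ : ℝ → ℝ≥0∞) (hρ : Measurable ρ) (R : ℝ) (hR : 0 < R)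
    (hdiv : ∫⁻ k in Metric.ball (0 : EuclideanSpace ℝ (Fin ν)) R, ρ ‖k‖ = ⊤) :
    ∫⁻ k in S ∩ Metric.ball (0 : EuclideanSpace ℝ (Fin ν)) R, ρ ‖k‖ = ⊤ :=
  statement_12_general ν S hopen hne hcone ρ R hdiv
end
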